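/- arXiv:1402.5201 — 7 statements merged into one kernel-verified Lean document; each statement's English description precedes it below -/
import Mathlib

section
/- Let H be a Hopf algebra over a field k with bijective antipode S, and let τ be a Hopf algebra automorphism of H of finite order r. If g ∈ H is a group-like element (i.e. Δ(g) = g ⊗ g and ε(g) = 1), then the order of the norm N(g) = g·τ(g)·τ²(g)⋯τ^{r-1}(g) in the group of group-like elements divides the twisted exponent exp_τ(H) (with the convention that every positive integer divides ∞). -/
open scoped TensorProduct

noncomputable section

namespace TwistedExponent

variable (k H : Type*) [CommRing k] [Ring H] [HopfAlgebra k H]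

/-- The convolution product of two linear endomorphisms of a bialgebra:
`f * g = μ ∘ (f ⊗ g) ∘ Δ`. -/
def conv (f g : H →ₗ[k] H) : H →ₗ[k] H :=
  LinearMap.mul' k H ∘ₗ TensorProduct.map f g ∘ₗ Coalgebra.comul

/-- The convolution unit `η ∘ ε`, i.e. `h ↦ ε(h)·1`. -/
def convOne : H →ₗ[k] H := Algebra.linearMap k H ∘ₗ Coalgebra.counit

/-- `gamma T m` is the map `Γ_m = μ^m ∘ (Id ⊗ T ⊗ T² ⊗ ⋯ ⊗ T^{m-1}) ∘ Δ^{m-1}`, expressed as the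
convolution product `Id * T * T² * ⋯ * T^{m-1}` (with `gamma T 0` the convolution unit). -/
def gamma (T : H →ₗ[k] H) : ℕ → (H →ₗ[k] H)
  | 0 => convOne k H
  | (m + 1) => conv k H (gamma T m) (T ^ m)

/-- The inverse of the antipode, given that the antipode is bijective. -/
def antipodeInv (hS : Function.Bijective (HopfAlgebra.antipode (R := k) (A := H))) :
    H →ₗ[k] H :=
  (LinearEquiv.ofBijective (HopfAlgebra.antipode (R := k) (A := H)) hS).symm

/-- The map `S⁻² ∘ τ`. -/
def twist (hS : Function.Bijective (HopfAlgebra.antipode (R := k) (A := H)))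
    (τ : H →ₗ[k] H) : H →ₗ[k] H :=
  antipodeInv k H hS ∘ₗ antipodeInv k H hS ∘ₗ τ

/-- `f : H → H` has exact (finite) order `r`. -/
def HasOrder (τ : H → H) (r : ℕ) : Prop :=
  0 < r ∧ τ^[r] = id ∧ ∀ s : ℕ, 0 < s → s < r → τ^[s] ≠ id

/-- The norm of `g` with respect to `τ`: `N(g) = g·τ(g)·τ²(g)⋯τ^{r-1}(g)`. -/
def norm (τ : H → H) (r : ℕ) (g : H) : H :=
  ((List.range r).map (fun i => τ^[i] g)).prod

end TwistedExponent

open TwistedExponent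

namespace TwistedExponent

variable {k H : Type*} [CommRing k] [Ring H] [HopfAlgebra k H]

/-- A group-like element. -/
def IsGl (x : H) : Prop :=
  Coalgebra.comul (R := k) x = x ⊗ₜ[k] x ∧ Coalgebra.counit (R := k) x = 1

lemma antipode_mul_self {x : H} (hx : IsGl (k := k) x) :
    HopfAlgebra.antipode (R := k) x * x = 1 := by
  have h := HopfAlgebra.mul_antipode_rTensor_comul_apply (R := k) (A := H) x
  rw [hx.1, hx.2] at h
  simpa using h

lemma self_mul_antipode {x : H} (hx : IsGl (k := k) x) :
    x * HopfAlgebra.antipode (R := k) x = 1 := by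
  have h := HopfAlgebra.mul_antipode_lTensor_comul_apply (R := k) (A := H) x
  rw [hx.1, hx.2] at h
  simpa using h

lemma isGl_antipode {x : H} (hx : IsGl (k := k) x) :
    IsGl (k := k) (HopfAlgebra.antipode (R := k) x) := by
  set S := HopfAlgebra.antipode (R := k) (A := H)
  have h1 : S x * x = 1 := antipode_mul_self hx
  have h2 : x * S x = 1 := self_mul_antipode hx
  constructor
  · have hc1 : Coalgebra.comul (R := k) (S x) * (x ⊗ₜ[k] x) = 1 := by
      rw [← hx.1, ← Bialgebra.comul_mul, h1, Bialgebra.comul_one]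
    have hc3 : (x ⊗ₜ[k] x) * (S x ⊗ₜ[k] S x) = 1 := by
      rw [Algebra.TensorProduct.tmul_mul_tmul, h2, Algebra.TensorProduct.one_def]
    calc Coalgebra.comul (R := k) (S x)
        = Coalgebra.comul (R := k) (S x) * ((x ⊗ₜ[k] x) * (S x ⊗ₜ[k] S x)) := by
          rw [hc3, mul_one]
      _ = (Coalgebra.comul (R := k) (S x) * (x ⊗ₜ[k] x)) * (S x ⊗ₜ[k] S x) := by
          rw [mul_assoc]
      _ = S x ⊗ₜ[k] S x := by rw [hc1, one_mul]
  · have : Coalgebra.counit (R := k) (S x * x) = 1 := by rw [h1, Bialgebra.counit_one]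
    rwa [Bialgebra.counit_mul, hx.2, mul_one] at this

lemma antipode_antipode {x : H} (hx : IsGl (k := k) x) :
    HopfAlgebra.antipode (R := k) (HopfAlgebra.antipode (R := k) x) = x := by
  set S := HopfAlgebra.antipode (R := k) (A := H)
  have h1 : S (S x) * S x = 1 := antipode_mul_self (isGl_antipode hx)
  have h2 : S x * x = 1 := antipode_mul_self hx
  calc S (S x) = S (S x) * (S x * x) := by rw [h2, mul_one]
    _ = (S (S x) * S x) * x := by rw [mul_assoc]
    _ = x := by rw [h1, one_mul]

lemma antipodeInv_eq {hS : Function.Bijective (HopfAlgebra.antipode (R := k) (A := H))}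
    {x : H} (hx : IsGl (k := k) x) :
    antipodeInv k H hS x = HopfAlgebra.antipode (R := k) x := by
  apply hS.injective
  show HopfAlgebra.antipode (R := k) (antipodeInv k H hS x) = _
  rw [antipode_antipode hx]
  exact (LinearEquiv.ofBijective (HopfAlgebra.antipode (R := k) (A := H)) hS).apply_symm_apply x

lemma antipodeInv_antipodeInv {hS : Function.Bijective (HopfAlgebra.antipode (R := k) (A := H))}
    {x : H} (hx : IsGl (k := k) x) :
    antipodeInv k H hS (antipodeInv k H hS x) = x := by
  rw [antipodeInv_eq hx, antipodeInv_eq (isGl_antipode hx), antipode_antipode hx]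

lemma isGl_coalgHom (τ : H ≃ₐc[k] H) {x : H} (hx : IsGl (k := k) x) :
    IsGl (k := k) (τ x) := by
  constructor
  · have := CoalgHomClass.map_comp_comul_apply (τ : H →ₗc[k] H) x
    rw [hx.1] at this
    simpa using this.symm
  · have := CoalgHomClass.counit_comp_apply (R := k) (τ : H →ₗc[k] H) x
    simpa [hx.2] using this

lemma twist_apply_gl {hS : Function.Bijective (HopfAlgebra.antipode (R := k) (A := H))}
    (τ : H ≃ₐc[k] H) {x : H} (hx : IsGl (k := k) x) :
    twist k H hS (τ : H →ₗ[k] H) x = τ x := by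
  have hτx : IsGl (k := k) (τ x) := isGl_coalgHom τ hx
  simp only [twist, LinearMap.comp_apply]
  rw [show ((τ : H ≃ₐc[k] H) : H →ₗ[k] H) x = τ x from rfl]
  exact antipodeInv_antipodeInv hτx

lemma twist_iterate_gl {hS : Function.Bijective (HopfAlgebra.antipode (R := k) (A := H))}
    (τ : H ≃ₐc[k] H) {x : H} (hx : IsGl (k := k) x) (j : ℕ) :
    (twist k H hS (τ : H →ₗ[k] H))^[j] x = (⇑τ)^[j] x ∧ IsGl (k := k) ((⇑τ)^[j] x) := by
  induction j with
  | zero => exact ⟨rfl, hx⟩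
  | succ n ih =>
    rw [Function.iterate_succ_apply', Function.iterate_succ_apply', ih.1]
    exact ⟨twist_apply_gl τ ih.2, isGl_coalgHom τ ih.2⟩

lemma conv_apply_gl (f f' : H →ₗ[k] H) {x : H} (hx : IsGl (k := k) x) :
    conv k H f f' x = f x * f' x := by
  simp [conv, hx.1]

lemma gamma_apply_gl (T : H →ₗ[k] H) {x : H} (hx : IsGl (k := k) x) (m : ℕ) :
    gamma k H T m x = ((List.range m).map (fun i => T^[i] x)).prod := by
  induction m with
  | zero => simp [gamma, convOne, hx.2]
  | succ n ih =>
    rw [gamma, conv_apply_gl _ _ hx, ih, List.range_succ]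
    simp [Module.End.pow_apply]

lemma prod_block (τ : H → H) (r : ℕ) (hτ : τ^[r] = id) (g : H) (n : ℕ) :
    ((List.range (n * r)).map (fun i => τ^[i] g)).prod = norm H τ r g ^ n := by
  induction n with
  | zero => simp
  | succ m ih =>
    have h : (m + 1) * r = m * r + r := by ring
    have hfun : ((fun i => τ^[i] g) ∘ fun x => m * r + x) = fun j => τ^[j] g := by
      funext j
      simp only [Function.comp_apply]
      rw [add_comm (m * r) j, Function.iterate_add_apply]
      congr 1
      rw [mul_comm, Function.iterate_mul, hτ]
      simp
    rw [h, List.range_add, List.map_append, List.prod_append, ih, pow_succ, norm,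
      List.map_map, hfun]

end TwistedExponent


/-- Let `H` be a Hopf algebra over a field `k` with bijective antipode `S` and
`τ` a Hopf algebra automorphism of `H` of finite order `r`.  If `g ∈ H` is group-like
(`Δ g = g ⊗ g`, `ε g = 1`), then the order of the norm `N(g) = g·τ(g)⋯τ^{r-1}(g)` divides the
twisted exponent `exp_τ(H)`, i.e. the least `e ≥ 1` with `Γ^τ_{er} = ε·1` (the convention that
every positive integer divides `∞` making the statement vacuous when no such `e` exists). -/
theorem stmt0 {k H : Type*} [Field k] [Ring H] [HopfAlgebra k H]
    (hS : Function.Bijective (HopfAlgebra.antipode (R := k) (A := H)))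
    (τ : H ≃ₐc[k] H) (r : ℕ) (hr : HasOrder H (⇑τ) r)
    (g : H) (hg₁ : Coalgebra.comul (R := k) g = g ⊗ₜ[k] g)
    (hg₂ : Coalgebra.counit (R := k) g = 1)
    (e : ℕ)
    (he : IsLeast {n : ℕ | 0 < n ∧
      gamma k H (twist k H hS (τ : H →ₗ[k] H)) (n * r) = convOne k H} e) :
    ∃ d : ℕ, IsLeast {m : ℕ | 0 < m ∧ norm H (⇑τ) r g ^ m = 1} d ∧ d ∣ e := by
  have hg : IsGl (k := k) g := ⟨hg₁, hg₂⟩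
  obtain ⟨⟨he0, hge⟩, -⟩ := he
  have key : norm H (⇑τ) r g ^ e = 1 := by
    have h1 : gamma k H (twist k H hS (τ : H →ₗ[k] H)) (e * r) g = convOne k H g :=
      congrFun (congrArg DFunLike.coe hge) g
    rw [gamma_apply_gl _ hg, convOne] at h1
    have h2 : ∀ i, (twist k H hS (τ : H →ₗ[k] H))^[i] g = (⇑τ)^[i] g :=
      fun i => (twist_iterate_gl τ hg i).1
    simp only [h2] at h1
    rw [prod_block (⇑τ) r hr.2.1 g e] at h1
    simpa [hg₂] using h1
  refine ⟨orderOf (norm H (⇑τ) r g), ⟨⟨?_, pow_orderOf_eq_one _⟩, ?_⟩, ?_⟩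
  · rw [orderOf_pos_iff]
    exact isOfFinOrder_iff_pow_eq_one.mpr ⟨e, he0, key⟩
  · rintro m ⟨hm0, hm1⟩
    exact Nat.le_of_dvd hm0 (orderOf_dvd_of_pow_eq_one hm1)
  · exact orderOf_dvd_of_pow_eq_one key
end
end

section
/- Let G be a group, k a field, and τ an automorphism of G of finite order r, extended linearly to a Hopf algebra automorphism of the group algebra k[G]. Then the twisted exponent exp_τ(k[G]) equals the least common multiple over g ∈ G of the orders of the norms N(g) = g·τ(g)·τ²(g)⋯τ^{r-1}(g) (with both sides possibly infinite). Equivalently, a positive integer k satisfies Γ^τ_{kr}(h) = ε(h)·1 for all h ∈ k[G] if and only if N(g)^k = 1 for all g ∈ G. -/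
open scoped TensorProduct

noncomputable section

open TwistedExponent

namespace TwistedExponent

/-- The norm of `g ∈ G` with respect to `τ`: `N(g) = g·τ(g)·τ²(g)⋯τ^{r-1}(g)`. -/
def normG {G : Type*} [Monoid G] (τ : G → G) (r : ℕ) (g : G) : G :=
  ((List.range r).map (fun i => τ^[i] g)).prod

/-- `f : G → G` has exact (finite) order `r`. -/
def HasOrderG {G : Type*} (τ : G → G) (r : ℕ) : Prop :=
  0 < r ∧ τ^[r] = id ∧ ∀ s : ℕ, 0 < s → s < r → τ^[s] ≠ id

end TwistedExponent

/-!
On a group-like element `a` the antipode squares to the identity, so `S⁻²τ` acts on the basis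
`ι G` of `k[G]` simply as `τ`. Since `Γ_m` is the convolution product `Id * T * ⋯ * T^{m-1}`
and convolution is pointwise multiplication on group-like elements, `Γ_m(ι g) = ι(N_m(g))`
with `N_m(g) = g·τ(g)⋯τ^{m-1}(g)`. As `τ^r = id`, `N_{nr}(g) = N(g)^n`, and `Γ_{nr}` agrees
with `h ↦ ε(h)·1` on the basis exactly when every `N(g)^n` is trivial.
-/

namespace TwistedExponent

section Norm

variable {G : Type*} [Monoid G] (τ : G → G)

lemma normG_add (a b : ℕ) (g : G) :
    normG τ (a + b) g = normG τ a g * normG τ b (τ^[a] g) := by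
  have hshift : (fun i => τ^[i] g) ∘ (a + ·) = fun i => τ^[i] (τ^[a] g) := by
    funext i
    rw [Function.comp_apply, Nat.add_comm, Function.iterate_add_apply]
  simp only [normG, List.range_add, List.map_append, List.prod_append, List.map_map, hshift]

lemma normG_succ (m : ℕ) (g : G) : normG τ (m + 1) g = normG τ m g * τ^[m] g := by
  simp [normG, List.range_succ]

lemma normG_mul_of_iterate_eq_id {r : ℕ} (hτr : τ^[r] = id) (n : ℕ) (g : G) :
    normG τ (n * r) g = normG τ r g ^ n := by
  induction n with
  | zero => simp [normG]
  | succ n ih =>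
    have hid : τ^[n * r] = id := by rw [Nat.mul_comm, Function.iterate_mul, hτr, Function.iterate_id]
    rw [Nat.succ_mul, normG_add, ih, hid, pow_succ, id]

end Norm

section GroupLike

variable {k H : Type*} [CommRing k] [Ring H] [HopfAlgebra k H] {a : H}

lemma antipodeInv_apply_of_isGroupLikeElem
    (hS : Function.Bijective (HopfAlgebra.antipode (R := k) (A := H)))
    (ha : IsGroupLikeElem k a) : antipodeInv k H hS a = HopfAlgebra.antipode k a := by
  conv_lhs => rw [← ha.antipode_antipode]
  exact LinearEquiv.ofBijective_symm_apply_apply _ _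

lemma antipodeInv_antipodeInv_apply_of_isGroupLikeElem
    (hS : Function.Bijective (HopfAlgebra.antipode (R := k) (A := H)))
    (ha : IsGroupLikeElem k a) : antipodeInv k H hS (antipodeInv k H hS a) = a := by
  rw [antipodeInv_apply_of_isGroupLikeElem hS ha,
    antipodeInv_apply_of_isGroupLikeElem hS ha.antipode, ha.antipode_antipode]

lemma twist_apply_of_isGroupLikeElem
    (hS : Function.Bijective (HopfAlgebra.antipode (R := k) (A := H))) (τ : H →ₗ[k] H)
    (ha : IsGroupLikeElem k (τ a)) : twist k H hS τ a = τ a :=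
  antipodeInv_antipodeInv_apply_of_isGroupLikeElem hS ha

lemma conv_apply_of_isGroupLikeElem (f g : H →ₗ[k] H) (ha : IsGroupLikeElem k a) :
    conv k H f g a = f a * g a := by
  simp [conv, ha.comul_eq_tmul_self]

lemma convOne_apply_of_isGroupLikeElem (ha : IsGroupLikeElem k a) : convOne k H a = 1 := by
  simp [convOne, ha.counit_eq_one]

lemma gamma_apply_eq_normG {G : Type*} [Monoid G] (ι : G →* H)
    (hι : ∀ g, IsGroupLikeElem k (ι g)) (T : H →ₗ[k] H) (σ : G → G)
    (hT : ∀ g, T (ι g) = ι (σ g)) (m : ℕ) (g : G) :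
    gamma k H T m (ι g) = ι (normG σ m g) := by
  induction m with
  | zero => simp [gamma, convOne_apply_of_isGroupLikeElem (hι g), normG]
  | succ m ih =>
    have hpow : (T ^ m) (ι g) = ι (σ^[m] g) := by
      rw [Module.End.coe_pow]
      exact (Function.Semiconj.iterate_right (fun g => (hT g).symm) m g).symm
    rw [gamma, conv_apply_of_isGroupLikeElem _ _ (hι g), ih, hpow, normG_succ, map_mul]

end GroupLike

end TwistedExponent

/-- Let `G` be a group, `k` a field, and `τ` an automorphism of `G` of finite
order `r`, extended linearly to a Hopf algebra automorphism of the group algebra `k[G]`.  (The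
group algebra is encoded as a Hopf algebra `H` with a monoid homomorphism `ι : G →* H` whose
values are group-like and form a `k`-basis of `H`, and `τH` is the linear extension of `τ`.)
Then a positive integer `n` satisfies `Γ^τ_{nr}(h) = ε(h)·1` for all `h ∈ k[G]` if and only if
`N(g)^n = 1` for all `g ∈ G`, where `N(g) = g·τ(g)⋯τ^{r-1}(g)`; that is, `exp_τ(k[G])` is the
least common multiple over `g ∈ G` of the orders of the norms `N(g)` (both sides possibly
infinite). -/
theorem stmt1 {k G H : Type*} [Field k] [Group G] [Ring H] [HopfAlgebra k H]
    (hS : Function.Bijective (HopfAlgebra.antipode (R := k) (A := H)))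
    (ι : G →* H) (b : Module.Basis G k H) (hb : ∀ g : G, b g = ι g)
    (hgl₁ : ∀ g : G, Coalgebra.comul (R := k) (ι g) = ι g ⊗ₜ[k] ι g)
    (hgl₂ : ∀ g : G, Coalgebra.counit (R := k) (ι g) = 1)
    (τ : G ≃* G) (r : ℕ) (hr : HasOrderG (⇑τ) r)
    (τH : H ≃ₐc[k] H) (hτH : ∀ g : G, τH (ι g) = ι (τ g)) :
    ∀ n : ℕ, 0 < n →
      (gamma k H (twist k H hS (τH : H →ₗ[k] H)) (n * r) = convOne k H ↔
        ∀ g : G, normG (⇑τ) r g ^ n = 1) := by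
  intro n _
  have hgl : ∀ g, IsGroupLikeElem k (ι g) := fun g => ⟨hgl₂ g, hgl₁ g⟩
  have hι : Function.Injective ι := funext hb ▸ b.injective
  have htwist : ∀ g, twist k H hS (τH : H →ₗ[k] H) (ι g) = ι (τ g) := fun g => by
    rw [twist_apply_of_isGroupLikeElem hS _ (by simpa [hτH] using hgl (τ g))]
    exact hτH g
  have hgamma : ∀ g, gamma k H (twist k H hS (τH : H →ₗ[k] H)) (n * r) (ι g)
      = ι (normG τ r g ^ n) := fun g => by
    rw [gamma_apply_eq_normG ι hgl _ τ htwist, normG_mul_of_iterate_eq_id τ hr.2.1]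
  constructor
  · intro hΓ g
    rw [← map_eq_one_iff ι hι, ← hgamma, hΓ, convOne_apply_of_isGroupLikeElem (hgl g)]
  · intro hN
    refine b.ext fun g => ?_
    rw [hb, hgamma, hN, map_one, convOne_apply_of_isGroupLikeElem (hgl g)]
end
end

section
/- Let H be a Hopf algebra over a field k with bijective antipode S and τ a Hopf algebra automorphism of H of finite order r, and suppose d_τ = r·exp_τ(H) ≤ 2. Then H is commutative and cocommutative, and moreover τ is either the identity map or the antipode S. -/
open scoped TensorProduct

noncomputable section

open TwistedExponent

/-!
Since `r * e ≤ 2`, one of `Γ₁ = Id` or `Γ₂ = Id * S⁻²τ` is the convolution unit `ηε`. If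
`Id = ηε`, then `H = k·1`. Otherwise `S⁻²τ` is a convolution inverse of `Id`, hence equals `S`,
so `S³ = τ`. As `S³` is anti-multiplicative and `τ` multiplicative and injective, `H` is
commutative; then `S² = Id`, so `τ = S`. Finally `S` is an anti-coalgebra map and, being `τ`,
also a coalgebra automorphism, which forces `Δ = Δᵒᵖ`.
-/

namespace HopfAlgebra

open Coalgebra WithConv

variable {R A : Type*} [CommSemiring R] [Semiring A] [HopfAlgebra R A]

lemma toConv_algHom_comp_antipode_mul {B : Type*} [Semiring B] [Algebra R B] (φ : A →ₐ[R] B) :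
    toConv (φ.toLinearMap ∘ₗ antipode R) * toConv φ.toLinearMap = 1 := by
  have h := LinearMap.algHom_comp_convMul_distrib φ (toConv (antipode R)) (toConv LinearMap.id)
  rw [LinearMap.antipode_mul_id] at h
  ext a
  simpa using (LinearMap.congr_fun h a).symm

lemma toConv_includeLeft_mul_includeRight :
    toConv (Algebra.TensorProduct.includeLeft (R := R) (S := R) (A := A) (B := A)).toLinearMap *
      toConv (Algebra.TensorProduct.includeRight (R := R) (A := A) (B := A)).toLinearMap =
      toConv (comul (R := R) (A := A)) := by
  ext a
  rw [(ℛ R a).convMul_apply, ofConv_toConv, ← (ℛ R a).eq]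
  simp

lemma toConv_includeRight_comp_antipode_mul_includeLeft_comp_antipode :
    toConv ((Algebra.TensorProduct.includeRight (R := R) (A := A) (B := A)).toLinearMap ∘ₗ
        antipode R) *
      toConv ((Algebra.TensorProduct.includeLeft (R := R) (S := R) (A := A) (B := A)).toLinearMap
        ∘ₗ antipode R) =
      toConv ((TensorProduct.comm R A A).toLinearMap ∘ₗ
        TensorProduct.map (antipode R) (antipode R) ∘ₗ comul) := by
  ext a
  rw [(ℛ R a).convMul_apply]
  simp [← (ℛ R a).eq]

-- `δ = i₁ * i₂` for the algebra maps `i₁ = (· ⊗ 1)` and `i₂ = (1 ⊗ ·)`, which have the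
-- convolution inverses `i₁ ∘ S` and `i₂ ∘ S`.
lemma comm_map_antipode_comul_mul_comul :
    toConv ((TensorProduct.comm R A A).toLinearMap ∘ₗ
        TensorProduct.map (antipode R) (antipode R) ∘ₗ comul) *
      toConv (comul (R := R) (A := A)) = 1 := by
  rw [← toConv_includeRight_comp_antipode_mul_includeLeft_comp_antipode,
    ← toConv_includeLeft_mul_includeRight, mul_assoc,
    ← mul_assoc (toConv (Algebra.TensorProduct.includeLeft.toLinearMap ∘ₗ antipode R)),
    toConv_algHom_comp_antipode_mul, one_mul, toConv_algHom_comp_antipode_mul]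

lemma comul_antipode (a : A) :
    comul (R := R) (antipode R a) =
      TensorProduct.comm R A A (TensorProduct.map (antipode R) (antipode R) (comul a)) := by
  have h := left_inv_eq_right_inv comm_map_antipode_comul_mul_comul
    (LinearMap.comul_right_inv (R := R) (C := A))
  exact (LinearMap.congr_fun (congrArg ofConv h) a).symm

lemma antipode_antipode_of_mul_comm (hcomm : ∀ a b : A, a * b = b * a) (a : A) :
    antipode R (antipode R a) = a := by
  let σ : A →ₐ[R] A := AlgHom.ofLinearMap (antipode R) antipode_one
    fun x y ↦ by rw [antipode_mul_antidistrib, hcomm]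
  exact LinearMap.congr_fun (congrArg ofConv
    (left_inv_eq_right_inv (toConv_algHom_comp_antipode_mul σ) LinearMap.antipode_mul_id)) a

lemma mul_comm_of_antipode_cube_eq {F : Type*} [FunLike F A A] [MulHomClass F A A] (φ : F)
    (hφ : Function.Injective φ) (h : ∀ a, antipode R (antipode R (antipode R a)) = φ a)
    (a b : A) : a * b = b * a := by
  apply hφ
  calc φ (a * b) = antipode R (antipode R (antipode R (a * b))) := (h _).symm
    _ = antipode R (antipode R (antipode R b)) * antipode R (antipode R (antipode R a)) := by
      simp only [antipode_mul_antidistrib]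
    _ = φ (b * a) := by rw [map_mul, h, h]

lemma isCocomm_of_coalgEquiv_eq_antipode (φ : A ≃ₗc[R] A) (h : ∀ a, φ a = antipode R a) :
    IsCocomm R A where
  comm_comp_comul := by
    have hφ : (φ : A →ₗ[R] A) = antipode R := LinearMap.ext h
    ext a
    apply (TensorProduct.congr φ.toLinearEquiv φ.toLinearEquiv).injective
    calc TensorProduct.map (φ : A →ₗ[R] A) φ (TensorProduct.comm R A A (comul a))
        = TensorProduct.comm R A A (TensorProduct.map (antipode R) (antipode R) (comul a)) := by
          rw [hφ, TensorProduct.map_comm]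
      _ = comul (φ a) := by rw [h, comul_antipode]
      _ = TensorProduct.map (φ : A →ₗ[R] A) φ (comul a) :=
        (CoalgHomClass.map_comp_comul_apply φ a).symm

end HopfAlgebra

namespace Bialgebra

variable {R A : Type*} [CommSemiring R] [Semiring A] [Bialgebra R A]

lemma mul_comm_of_forall_eq_algebraMap_counit
    (h : ∀ a : A, a = algebraMap R A (Coalgebra.counit a)) (a b : A) : a * b = b * a := by
  rw [h a]
  exact Algebra.commutes _ _

lemma isCocomm_of_forall_eq_algebraMap_counit
    (h : ∀ a : A, a = algebraMap R A (Coalgebra.counit a)) : Coalgebra.IsCocomm R A where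
  comm_comp_comul := by
    ext a
    rw [LinearMap.comp_apply, LinearEquiv.coe_coe, h a, comul_algebraMap,
      Algebra.TensorProduct.algebraMap_apply, Algebra.algebraMap_eq_smul_one,
      ← TensorProduct.smul_tmul', map_smul, TensorProduct.comm_tmul]

end Bialgebra

namespace TwistedExponent

open WithConv

variable {k H : Type*} [CommRing k] [Ring H] [HopfAlgebra k H]

lemma gamma_one (T : H →ₗ[k] H) : gamma k H T 1 = LinearMap.id :=
  show ofConv (1 * toConv (T ^ 0)) = _ by rw [one_mul, pow_zero]; rfl

lemma gamma_two (T : H →ₗ[k] H) : gamma k H T 2 = ofConv (toConv LinearMap.id * toConv T) :=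
  show ofConv (toConv (gamma k H T 1) * toConv (T ^ 1)) = _ by rw [gamma_one, pow_one]

lemma eq_algebraMap_counit_of_gamma_one_eq_convOne {T : H →ₗ[k] H}
    (h : gamma k H T 1 = convOne k H) (a : H) : a = algebraMap k H (Coalgebra.counit a) := by
  rw [gamma_one] at h
  exact LinearMap.congr_fun h a

lemma eq_antipode_of_gamma_two_eq_convOne {T : H →ₗ[k] H} (h : gamma k H T 2 = convOne k H) :
    T = HopfAlgebra.antipode k := by
  rw [gamma_two] at h
  exact congrArg ofConv (left_inv_eq_right_inv LinearMap.antipode_mul_id (ofConv_injective h)).symm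

lemma antipode_cube_of_twist_eq_antipode
    (hS : Function.Bijective (HopfAlgebra.antipode (R := k) (A := H))) {τ : H →ₗ[k] H}
    (h : twist k H hS τ = HopfAlgebra.antipode k) (a : H) :
    HopfAlgebra.antipode k (HopfAlgebra.antipode k (HopfAlgebra.antipode k a)) = τ a := by
  have hSS : ∀ y, HopfAlgebra.antipode k (antipodeInv k H hS y) = y :=
    (LinearEquiv.ofBijective _ hS).apply_symm_apply
  have hSa : HopfAlgebra.antipode k a = antipodeInv k H hS (antipodeInv k H hS (τ a)) :=
    (LinearMap.congr_fun h a).symm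
  rw [hSa, hSS, hSS]

end TwistedExponent

/-- Let `H` be a Hopf algebra over a field `k` with bijective antipode `S` and
`τ` a Hopf algebra automorphism of `H` of finite order `r`, and suppose
`d_τ = r·exp_τ(H) ≤ 2`.  Then `H` is commutative and cocommutative, and `τ` is either the
identity map or the antipode `S`. -/
theorem stmt3 {k H : Type*} [Field k] [Ring H] [HopfAlgebra k H]
    (hS : Function.Bijective (HopfAlgebra.antipode (R := k) (A := H)))
    (τ : H ≃ₐc[k] H) (r : ℕ) (hr : HasOrder H (⇑τ) r)
    (e : ℕ)
    (he : IsLeast {n : ℕ | 0 < n ∧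
      gamma k H (twist k H hS (τ : H →ₗ[k] H)) (n * r) = convOne k H} e)
    (hd : r * e ≤ 2) :
    (∀ a b : H, a * b = b * a) ∧
    (∀ h : H, TensorProduct.comm k H H (Coalgebra.comul (R := k) h) = Coalgebra.comul h) ∧
    ((∀ h : H, τ h = h) ∨ ∀ h : H, τ h = HopfAlgebra.antipode (R := k) h) := by
  obtain ⟨⟨he0, hΓ⟩, -⟩ := he
  obtain ⟨hr0, hτr, -⟩ := hr
  obtain h1 | h2 : e * r = 1 ∨ e * r = 2 := by
    have := Nat.mul_pos he0 hr0
    rw [Nat.mul_comm] at hd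
    omega
  · have hscalar := eq_algebraMap_counit_of_gamma_one_eq_convOne (h1 ▸ hΓ)
    rw [Nat.eq_one_of_mul_eq_one_left h1, Function.iterate_one] at hτr
    have := Bialgebra.isCocomm_of_forall_eq_algebraMap_counit hscalar
    exact ⟨Bialgebra.mul_comm_of_forall_eq_algebraMap_counit hscalar, Coalgebra.comm_comul k,
      Or.inl (congrFun hτr)⟩
  · have hS3 := antipode_cube_of_twist_eq_antipode hS
      (eq_antipode_of_gamma_two_eq_convOne (h2 ▸ hΓ))
    have hcomm := HopfAlgebra.mul_comm_of_antipode_cube_eq τ τ.injective hS3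
    have hτS : ∀ h, τ h = HopfAlgebra.antipode k h := fun h ↦
      (hS3 h).symm.trans (HopfAlgebra.antipode_antipode_of_mul_comm hcomm _)
    have := HopfAlgebra.isCocomm_of_coalgEquiv_eq_antipode τ.toCoalgEquiv hτS
    exact ⟨hcomm, Coalgebra.comm_comul k, Or.inr hτS⟩
end
end

section
/- Let H be a Hopf algebra over a field k with bijective antipode S, τ a Hopf algebra automorphism of H of finite order r, and A ⊆ H a Hopf subalgebra with τ(A) = A; let r' be the order of τ restricted to A (so r' divides r). Then exp_{τ|_A}(A) divides exp_τ(H)·(r/r'). In particular, if r' = r, then exp_{τ|_A}(A) divides exp_τ(H). -/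
open scoped TensorProduct

noncomputable section

open TwistedExponent

/-!
Write `T = S⁻²τ`. Since `S` is an anti-automorphism of the algebra `H`, `T` is an injective
algebra endomorphism, and in the convolution algebra `Γ_{m+n} = Γ_m * (T^m ∘ Γ_n)`. Hence
`Γ_m = ε` and `Γ_{m+n} = ε` force `Γ_n = ε`, so every `n` with `Γ_{n r'} = ε` is a multiple of the
least positive one. A bialgebra map between Hopf algebras intertwines the antipodes, so `Γ` on `A`
is the restriction of `Γ` on `H`, and `Γ_{e r} = ε` on `H` gives `Γ_{e (r/r') r'} = ε` on `A`.
-/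

open WithConv

theorem Nat.dvd_of_isLeast_of_add_cancel {P : ℕ → Prop} (hP : ∀ m n, P m → P (m + n) → P n)
    {e : ℕ} (he : IsLeast {n | 0 < n ∧ P n} e) {n : ℕ} (hn : P n) : e ∣ n := by
  induction n using Nat.strong_induction_on with
  | _ n ih =>
    rcases lt_or_ge n e with hlt | hle
    · obtain rfl : n = 0 := by
        by_contra h0
        exact (he.2 ⟨Nat.pos_of_ne_zero h0, hn⟩).not_gt hlt
      exact dvd_zero e
    · obtain ⟨d, rfl⟩ := Nat.exists_eq_add_of_le hle
      exact dvd_add dvd_rfl (ih d (by have := he.1.1; omega) (hP e d he.1.2 hn))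

theorem AlgHom.toLinearMap_pow {R A : Type*} [CommSemiring R] [Semiring A] [Algebra R A]
    (T : A →ₐ[R] A) (n : ℕ) : (T ^ n).toLinearMap = T.toLinearMap ^ n :=
  map_pow AlgHom.toEnd T n

namespace TwistedExponent

theorem HasOrder.isLeast {H : Type*} {f : H → H} {r : ℕ} (h : HasOrder H f r) :
    IsLeast {n | 0 < n ∧ f^[n] = id} r :=
  ⟨⟨h.1, h.2.1⟩, fun s ⟨hs, hs'⟩ => not_lt.1 fun hlt => h.2.2 s hs hlt hs'⟩

theorem HasOrder.dvd_of_iterate_eq_id {H : Type*} {f : H → H} {r n : ℕ} (h : HasOrder H f r)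
    (hn : f^[n] = id) : r ∣ n :=
  Nat.dvd_of_isLeast_of_add_cancel
    (fun m n hm hmn => by rwa [Function.iterate_add, hm, Function.id_comp] at hmn) h.isLeast hn

section Convolution

variable {k H : Type*} [CommRing k] [Ring H] [HopfAlgebra k H]

theorem convOne_eq_ofConv_one : convOne k H = (1 : WithConv (H →ₗ[k] H)).ofConv := rfl

theorem gamma_zero (T : H →ₗ[k] H) : gamma k H T 0 = (1 : WithConv (H →ₗ[k] H)).ofConv := rfl

theorem gamma_succ (T : H →ₗ[k] H) (m : ℕ) :
    gamma k H T (m + 1) = (toConv (gamma k H T m) * toConv (T ^ m)).ofConv := rfl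

theorem gamma_add (T : H →ₐ[k] H) (m n : ℕ) :
    gamma k H T.toLinearMap (m + n) = (toConv (gamma k H T.toLinearMap m) *
      toConv ((T ^ m).toLinearMap ∘ₗ gamma k H T.toLinearMap n)).ofConv := by
  induction n with
  | zero => rw [add_zero, gamma_zero, LinearMap.algHom_comp_convOne, toConv_ofConv, mul_one]
  | succ n ih =>
    have hpow : (T ^ m).toLinearMap ∘ₗ T.toLinearMap ^ n = T.toLinearMap ^ (m + n) := by
      rw [pow_add, AlgHom.toLinearMap_pow]; rfl
    rw [← add_assoc, gamma_succ, ih, gamma_succ, LinearMap.algHom_comp_convMul_distrib]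
    simp only [toConv_ofConv, mul_assoc, hpow]

theorem gamma_eq_convOne_of_add {T : H →ₐ[k] H} (hT : Function.Injective T) {m n : ℕ}
    (hm : gamma k H T.toLinearMap m = convOne k H)
    (hmn : gamma k H T.toLinearMap (m + n) = convOne k H) :
    gamma k H T.toLinearMap n = convOne k H := by
  rw [gamma_add, hm, convOne_eq_ofConv_one, toConv_ofConv, one_mul, ofConv_toConv] at hmn
  have h : (T ^ m).toLinearMap ∘ₗ gamma k H T.toLinearMap n =
      (T ^ m).toLinearMap ∘ₗ convOne k H := by
    rw [hmn, convOne_eq_ofConv_one, LinearMap.algHom_comp_convOne]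
  ext x
  exact (hT.iterate m) (by simpa using LinearMap.congr_fun h x)

end Convolution

section Antipode

variable {k H : Type*} [CommRing k] [Ring H] [HopfAlgebra k H]
  (hS : Function.Bijective (HopfAlgebra.antipode (R := k) (A := H)))

theorem antipode_antipodeInv (x : H) : HopfAlgebra.antipode k (antipodeInv k H hS x) = x :=
  (LinearEquiv.ofBijective _ hS).apply_symm_apply x

theorem antipodeInv_injective : Function.Injective (antipodeInv k H hS) :=
  (LinearEquiv.ofBijective _ hS).symm.injective

theorem antipodeInv_one : antipodeInv k H hS 1 = 1 :=
  hS.1 (by rw [antipode_antipodeInv, HopfAlgebra.antipode_one])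

theorem antipodeInv_mul (a b : H) :
    antipodeInv k H hS (a * b) = antipodeInv k H hS b * antipodeInv k H hS a :=
  hS.1 (by rw [antipode_antipodeInv, HopfAlgebra.antipode_mul_antidistrib, antipode_antipodeInv,
    antipode_antipodeInv])

def antipodeInvSq : H →ₐ[k] H :=
  AlgHom.ofLinearMap (antipodeInv k H hS ∘ₗ antipodeInv k H hS)
    (by simp [antipodeInv_one]) (fun a b => by simp [antipodeInv_mul])

theorem gamma_twist_eq_convOne_of_add {τ : H →ₐ[k] H} (hτ : Function.Injective τ) {m n : ℕ}
    (hm : gamma k H (twist k H hS τ.toLinearMap) m = convOne k H)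
    (hmn : gamma k H (twist k H hS τ.toLinearMap) (m + n) = convOne k H) :
    gamma k H (twist k H hS τ.toLinearMap) n = convOne k H :=
  gamma_eq_convOne_of_add (T := (antipodeInvSq hS).comp τ)
    ((antipodeInv_injective hS).comp ((antipodeInv_injective hS).comp hτ)) hm hmn

end Antipode

section BialgHom

variable {k H A : Type*} [CommRing k] [Ring H] [HopfAlgebra k H] [Ring A] [HopfAlgebra k A]
  (ι : A →ₐc[k] H)

theorem antipode_comp_bialgHom :
    HopfAlgebra.antipode k ∘ₗ (ι : A →ₗ[k] H) = (ι : A →ₗ[k] H) ∘ₗ HopfAlgebra.antipode k := by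
  -- both sides are convolution inverses of `ι`
  have hleft : toConv ((ι : A →ₗ[k] H) ∘ₗ HopfAlgebra.antipode k) * toConv (ι : A →ₗ[k] H) = 1 :=
    ofConv_injective <| calc
      _ = (AlgHomClass.toAlgHom ι).toLinearMap ∘ₗ
            (toConv (HopfAlgebra.antipode k) * toConv LinearMap.id :
              WithConv (A →ₗ[k] A)).ofConv := by
          rw [LinearMap.algHom_comp_convMul_distrib]; rfl
      _ = _ := by rw [LinearMap.antipode_mul_id, LinearMap.algHom_comp_convOne]
  have hright : toConv (ι : A →ₗ[k] H) * toConv (HopfAlgebra.antipode k ∘ₗ (ι : A →ₗ[k] H)) = 1 :=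
    ofConv_injective <| calc
      _ = (toConv LinearMap.id * toConv (HopfAlgebra.antipode k) : WithConv (H →ₗ[k] H)).ofConv ∘ₗ
            ι.toCoalgHom.toLinearMap := by
          rw [LinearMap.convMul_comp_coalgHom_distrib]; rfl
      _ = _ := by rw [LinearMap.id_mul_antipode, LinearMap.convOne_comp_coalgHom]
  exact congrArg ofConv (left_inv_eq_right_inv hleft hright).symm

theorem convOne_comp_bialgHom :
    (1 : WithConv (H →ₗ[k] H)).ofConv ∘ₗ (ι : A →ₗ[k] H) =
      (ι : A →ₗ[k] H) ∘ₗ (1 : WithConv (A →ₗ[k] A)).ofConv :=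
  (LinearMap.convOne_comp_coalgHom ι.toCoalgHom).trans
    (LinearMap.algHom_comp_convOne (AlgHomClass.toAlgHom ι)).symm

variable (hS : Function.Bijective (HopfAlgebra.antipode (R := k) (A := H)))
  (hSA : Function.Bijective (HopfAlgebra.antipode (R := k) (A := A)))

theorem antipodeInv_bialgHom (x : A) : antipodeInv k H hS (ι x) = ι (antipodeInv k A hSA x) := by
  apply hS.1
  have h := LinearMap.congr_fun (antipode_comp_bialgHom ι) (antipodeInv k A hSA x)
  dsimp at h
  rw [antipode_antipodeInv, h, antipode_antipodeInv]

theorem twist_comp_bialgHom {τ : H →ₗ[k] H} {τA : A →ₗ[k] A} (h : ∀ a, τ (ι a) = ι (τA a)) :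
    twist k H hS τ ∘ₗ (ι : A →ₗ[k] H) = (ι : A →ₗ[k] H) ∘ₗ twist k A hSA τA := by
  ext x
  simp [twist, h, antipodeInv_bialgHom ι hS hSA]

theorem gamma_comp_bialgHom {T : H →ₗ[k] H} {TA : A →ₗ[k] A}
    (h : T ∘ₗ (ι : A →ₗ[k] H) = (ι : A →ₗ[k] H) ∘ₗ TA) (m : ℕ) :
    gamma k H T m ∘ₗ (ι : A →ₗ[k] H) = (ι : A →ₗ[k] H) ∘ₗ gamma k A TA m := by
  induction m with
  | zero => rw [gamma_zero, gamma_zero, convOne_comp_bialgHom]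
  | succ m ih =>
    rw [gamma_succ, gamma_succ]
    calc _ = (toConv (gamma k H T m ∘ₗ (ι : A →ₗ[k] H)) *
            toConv ((T ^ m) ∘ₗ (ι : A →ₗ[k] H))).ofConv :=
          LinearMap.convMul_comp_coalgHom_distrib _ _ ι.toCoalgHom
      _ = (toConv ((ι : A →ₗ[k] H) ∘ₗ gamma k A TA m) *
            toConv ((ι : A →ₗ[k] H) ∘ₗ TA ^ m)).ofConv := by
          rw [ih, Module.End.commute_pow_left_of_commute h]
      _ = _ := (LinearMap.algHom_comp_convMul_distrib (AlgHomClass.toAlgHom ι) _ _).symm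

end BialgHom

end TwistedExponent

/-- Let `H` be a Hopf algebra over a field `k` with bijective antipode, `τ` a
Hopf algebra automorphism of `H` of finite order `r`, and `A ⊆ H` a Hopf subalgebra with
`τ(A) = A` (encoded as a Hopf algebra `A` together with an injective bialgebra homomorphism
`ι : A → H` and the restricted automorphism `τA` with `τ ∘ ι = ι ∘ τA`); let `r'` be the order
of `τ` restricted to `A`.  Then `exp_{τ|A}(A)` divides `exp_τ(H)·(r/r')` whenever the latter is
finite (the statement being vacuous when `exp_τ(H) = ∞`, per the convention that every positive
integer divides `∞`). -/
theorem stmt8 {k H A : Type*} [Field k] [Ring H] [HopfAlgebra k H] [Ring A] [HopfAlgebra k A]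
    (hS : Function.Bijective (HopfAlgebra.antipode (R := k) (A := H)))
    (hSA : Function.Bijective (HopfAlgebra.antipode (R := k) (A := A)))
    (τ : H ≃ₐc[k] H) (r : ℕ) (hr : HasOrder H (⇑τ) r)
    (ι : A →ₐc[k] H) (hι : Function.Injective ι)
    (τA : A ≃ₐc[k] A) (hcomm : ∀ a : A, τ (ι a) = ι (τA a))
    (r' : ℕ) (hr' : HasOrder A (⇑τA) r')
    (e : ℕ)
    (he : IsLeast {n : ℕ | 0 < n ∧
      gamma k H (twist k H hS (τ : H →ₗ[k] H)) (n * r) = convOne k H} e) :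
    ∃ e' : ℕ, IsLeast {n : ℕ | 0 < n ∧
      gamma k A (twist k A hSA (τA : A →ₗ[k] A)) (n * r') = convOne k A} e' ∧
      e' ∣ e * (r / r') := by
  classical
  have hr'r : r' ∣ r := hr'.dvd_of_iterate_eq_id <| funext fun a => hι <| by
    rw [Function.Semiconj.iterate_right (fun a => (hcomm a).symm) r a, hr.2.1]; rfl
  have hgamma : ∀ m, gamma k H (twist k H hS (τ : H →ₗ[k] H)) m ∘ₗ (ι : A →ₗ[k] H) =
      (ι : A →ₗ[k] H) ∘ₗ gamma k A (twist k A hSA (τA : A →ₗ[k] A)) m :=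
    gamma_comp_bialgHom ι (twist_comp_bialgHom ι hS hSA hcomm)
  have hmem : 0 < e * (r / r') ∧
      gamma k A (twist k A hSA (τA : A →ₗ[k] A)) (e * (r / r') * r') = convOne k A := by
    refine ⟨mul_pos he.1.1 (Nat.div_pos (Nat.le_of_dvd hr.1 hr'r) hr'.1), ?_⟩
    rw [mul_assoc, Nat.div_mul_cancel hr'r]
    ext a
    apply hι
    have h := LinearMap.congr_fun (hgamma (e * r)) a
    rw [LinearMap.comp_apply, he.1.2] at h
    exact h.symm.trans (LinearMap.congr_fun (hgamma 0) a)
  refine ⟨_, Nat.isLeast_find ⟨_, hmem⟩,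
    Nat.dvd_of_isLeast_of_add_cancel (fun m n hm hmn => ?_) (Nat.isLeast_find ⟨_, hmem⟩) hmem.2⟩
  rw [add_mul] at hmn
  exact gamma_twist_eq_convOne_of_add hSA (τ := τA) τA.injective hm hmn
end
end

section
/- Let H be a Hopf algebra over a field k with bijective antipode S and τ a Hopf algebra automorphism of H of finite order r, and let K be a field extension of k. Then the twisted exponent of the base-changed Hopf algebra H ⊗_k K with respect to the automorphism τ ⊗ Id_K equals exp_τ(H). -/
open scoped TensorProduct

noncomputable section

namespace TwistedExponent

section TensorIota

variable {k K H H' : Type*} [Field k] [Field K] [Algebra k K]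
  [AddCommGroup H] [Module k H] [AddCommGroup H'] [Module k H']
  [Module K H'] [IsScalarTower k K H']

/-- The canonical `k`-linear map `H ⊗[k] H → H' ⊗[K] H'` induced by `ι : H → H'`. -/
def tensorIota (ι : H →ₗ[k] H') :
    H ⊗[k] H →ₗ[k] (H' ⊗[K] H') :=
  TensorProduct.lift <| LinearMap.mk₂ k (fun x y => ι x ⊗ₜ[K] ι y)
    (fun x₁ x₂ y => by simp [TensorProduct.add_tmul])
    (fun a x y => by simp [TensorProduct.smul_tmul'])
    (fun x y₁ y₂ => by simp [TensorProduct.tmul_add])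
    (fun a x y => by simp [← TensorProduct.smul_tmul', TensorProduct.smul_tmul])

end TensorIota

end TwistedExponent

/-!
The structure maps of `H' = H ⊗_k K` restrict along `ι : H → H'` to those of `H`, so every
convolution product on `H'` of maps extending maps on `H`, precomposed with `ι`, is `ι` composed
with the corresponding product on `H`. For the antipode this follows from uniqueness of inverses
in the convolution algebra of `k`-linear maps `H → H'`, where `S' ∘ ι` and `ι ∘ S` are both
inverse to `ι`. Hence `Γ'_m ∘ ι = ι ∘ Γ_m`. Since `ι` is injective (`K` is flat over `k`) and
its image spans `H'` over `K`, `Γ_m = ε·1` holds on `H` iff it holds on `H'`.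
-/

namespace LinearMap

variable {k K M N : Type*}

lemma injective_of_injective_liftBaseChange [Field k] [CommRing K] [Nontrivial K] [Algebra k K]
    [AddCommGroup M] [Module k M] [AddCommMonoid N] [Module k N] [Module K N]
    [IsScalarTower k K N] {ι : M →ₗ[k] N}
    (hι : Function.Injective (ι.liftBaseChange K)) : Function.Injective ι := by
  have hfactor : ⇑ι = ι.liftBaseChange K ∘ TensorProduct.mk k K M 1 := by
    ext m; simp
  rw [hfactor]
  exact hι.comp (Module.Flat.tensorProduct_mk_injective k M K)

lemma ext_of_surjective_liftBaseChange {P : Type*} [CommSemiring k] [CommSemiring K]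
    [Algebra k K] [AddCommMonoid M] [Module k M] [AddCommMonoid N] [Module k N] [Module K N]
    [IsScalarTower k K N] [AddCommMonoid P] [Module k P] [Module K P] [IsScalarTower k K P]
    {ι : M →ₗ[k] N}
    (hι : Function.Surjective (ι.liftBaseChange K)) {f g : N →ₗ[K] P}
    (h : f.restrictScalars k ∘ₗ ι = g.restrictScalars k ∘ₗ ι) : f = g := by
  refine (cancel_right hι).1 (TensorProduct.AlgebraTensorModule.ext fun a m => ?_)
  simpa using congr(a • $h m)

lemma restrictScalars_pow_comp [CommSemiring k] [Semiring K] [Algebra k K]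
    [AddCommMonoid M] [Module k M] [AddCommMonoid N] [Module k N] [Module K N]
    [IsScalarTower k K N] {ι : M →ₗ[k] N} {T : M →ₗ[k] M} {T' : N →ₗ[K] N}
    (hT : T'.restrictScalars k ∘ₗ ι = ι ∘ₗ T) (j : ℕ) :
    (T' ^ j).restrictScalars k ∘ₗ ι = ι ∘ₗ T ^ j := by
  induction j with
  | zero => rfl
  | succ j ih =>
    rw [pow_succ', pow_succ', Module.End.mul_eq_comp, Module.End.mul_eq_comp,
      restrictScalars_comp, comp_assoc, ih, ← comp_assoc, hT, comp_assoc]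

end LinearMap

namespace TwistedExponent

open WithConv

@[simp]
lemma tensorIota_tmul {k K H H' : Type*} [Field k] [Field K] [Algebra k K]
    [AddCommGroup H] [Module k H] [AddCommGroup H'] [Module k H'] [Module K H']
    [IsScalarTower k K H'] (ι : H →ₗ[k] H') (x y : H) :
    tensorIota (K := K) ι (x ⊗ₜ[k] y) = ι x ⊗ₜ[K] ι y :=
  rfl

abbrev algebraOfIsScalarTower (k K A : Type*) [CommSemiring k] [CommSemiring K] [Algebra k K]
    [Semiring A] [Algebra K A] [Module k A] [IsScalarTower k K A] : Algebra k A :=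
  Algebra.ofModule (fun c x y => by rw [← algebraMap_smul K c x, smul_mul_assoc, algebraMap_smul])
    (fun c x y => by rw [← algebraMap_smul K c y, mul_smul_comm, algebraMap_smul])

lemma antipode_antipodeInv_s10 {k H : Type*} [CommRing k] [Ring H] [HopfAlgebra k H]
    (hS : Function.Bijective (HopfAlgebra.antipode (R := k) (A := H))) (h : H) :
    HopfAlgebra.antipode k (antipodeInv k H hS h) = h :=
  (LinearEquiv.ofBijective _ hS).apply_symm_apply h

lemma conv_antipode_id {k H : Type*} [CommRing k] [Ring H] [HopfAlgebra k H] :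
    conv k H (HopfAlgebra.antipode k) LinearMap.id = convOne k H :=
  congr(ofConv $(LinearMap.antipode_mul_id))

lemma conv_id_antipode {k H : Type*} [CommRing k] [Ring H] [HopfAlgebra k H] :
    conv k H LinearMap.id (HopfAlgebra.antipode k) = convOne k H :=
  congr(ofConv $(LinearMap.id_mul_antipode))

structure IsBialgHomAlong {k : Type*} (K : Type*) {H H' : Type*} [Field k] [Field K]
    [Algebra k K] [Ring H] [HopfAlgebra k H] [Ring H'] [HopfAlgebra K H'] [Module k H']
    [IsScalarTower k K H']
    (ι : H →ₗ[k] H') : Prop where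
  map_mul : ∀ x y : H, ι (x * y) = ι x * ι y
  map_one : ι 1 = 1
  counit_apply : ∀ h : H,
    Coalgebra.counit (R := K) (ι h) = algebraMap k K (Coalgebra.counit (R := k) h)
  comul_apply : ∀ h : H,
    Coalgebra.comul (R := K) (ι h) = tensorIota (K := K) ι (Coalgebra.comul (R := k) h)

namespace IsBialgHomAlong

variable {k K H H' : Type*} [Field k] [Field K] [Algebra k K] [Ring H] [HopfAlgebra k H]
  [Ring H'] [HopfAlgebra K H'] [Algebra k H'] [IsScalarTower k K H']
  {ι : H →ₗ[k] H'} (hι : IsBialgHomAlong K ι)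
include hι

lemma toConv_comp_conv (f g : H →ₗ[k] H) :
    toConv (ι ∘ₗ conv k H f g) = toConv (ι ∘ₗ f) * toConv (ι ∘ₗ g) := by
  ext h
  simp only [conv, LinearMap.comp_apply, LinearMap.convMul_apply]
  induction Coalgebra.comul (R := k) h using TensorProduct.induction_on with
  | zero => simp
  | tmul x y => simp [hι.map_mul]
  | add t₁ t₂ ih₁ ih₂ => simp only [map_add, ih₁, ih₂]

lemma toConv_comp_convOne : toConv (ι ∘ₗ convOne k H) = 1 := by
  ext h
  simp [convOne, Algebra.algebraMap_eq_smul_one, hι.map_one]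

lemma toConv_conv_comp (f g : H' →ₗ[K] H') :
    toConv ((conv K H' f g).restrictScalars k ∘ₗ ι) =
      toConv (f.restrictScalars k ∘ₗ ι) * toConv (g.restrictScalars k ∘ₗ ι) := by
  ext h
  simp only [conv, LinearMap.comp_apply, LinearMap.restrictScalars_apply,
    LinearMap.convMul_apply, hι.comul_apply]
  induction Coalgebra.comul (R := k) h using TensorProduct.induction_on with
  | zero => simp
  | tmul x y => simp
  | add t₁ t₂ ih₁ ih₂ => simp only [map_add, ih₁, ih₂]

lemma toConv_convOne_comp : toConv ((convOne K H').restrictScalars k ∘ₗ ι) = 1 := by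
  ext h
  simp [convOne, hι.counit_apply, Algebra.algebraMap_eq_smul_one]

lemma antipode_comp :
    (HopfAlgebra.antipode (R := K) (A := H')).restrictScalars k ∘ₗ ι =
      ι ∘ₗ HopfAlgebra.antipode (R := k) (A := H) := by
  have hleft : toConv (ι ∘ₗ HopfAlgebra.antipode k) * toConv ι = 1 := by
    change _ * toConv (ι ∘ₗ LinearMap.id) = 1
    rw [← hι.toConv_comp_conv, conv_antipode_id, hι.toConv_comp_convOne]
  have hright : toConv ι *
      toConv ((HopfAlgebra.antipode (R := K) (A := H')).restrictScalars k ∘ₗ ι) = 1 := by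
    change toConv ((LinearMap.id : H' →ₗ[K] H').restrictScalars k ∘ₗ ι) * _ = 1
    rw [← hι.toConv_conv_comp, conv_id_antipode, hι.toConv_convOne_comp]
  exact toConv_injective (left_inv_eq_right_inv hleft hright).symm

lemma conv_comp {f g : H →ₗ[k] H} {f' g' : H' →ₗ[K] H'}
    (hf : f'.restrictScalars k ∘ₗ ι = ι ∘ₗ f) (hg : g'.restrictScalars k ∘ₗ ι = ι ∘ₗ g) :
    (conv K H' f' g').restrictScalars k ∘ₗ ι = ι ∘ₗ conv k H f g :=
  toConv_injective (by rw [hι.toConv_conv_comp, hf, hg, hι.toConv_comp_conv])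

lemma convOne_comp : (convOne K H').restrictScalars k ∘ₗ ι = ι ∘ₗ convOne k H :=
  toConv_injective (hι.toConv_convOne_comp.trans hι.toConv_comp_convOne.symm)

lemma gamma_comp {T : H →ₗ[k] H} {T' : H' →ₗ[K] H'} (hT : T'.restrictScalars k ∘ₗ ι = ι ∘ₗ T)
    (m : ℕ) : (gamma K H' T' m).restrictScalars k ∘ₗ ι = ι ∘ₗ gamma k H T m := by
  induction m with
  | zero => exact hι.convOne_comp
  | succ m ih => exact hι.conv_comp ih (LinearMap.restrictScalars_pow_comp hT m)

lemma antipodeInv_comp (hS : Function.Bijective (HopfAlgebra.antipode (R := k) (A := H)))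
    (hS' : Function.Bijective (HopfAlgebra.antipode (R := K) (A := H'))) :
    (antipodeInv K H' hS').restrictScalars k ∘ₗ ι = ι ∘ₗ antipodeInv k H hS := by
  ext h
  apply hS'.1
  have hcomm := congr($hι.antipode_comp (antipodeInv k H hS h))
  simp only [LinearMap.comp_apply, LinearMap.restrictScalars_apply] at hcomm ⊢
  rw [hcomm, antipode_antipodeInv_s10, antipode_antipodeInv_s10]

lemma twist_comp (hS : Function.Bijective (HopfAlgebra.antipode (R := k) (A := H)))
    (hS' : Function.Bijective (HopfAlgebra.antipode (R := K) (A := H')))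
    {T : H →ₗ[k] H} {T' : H' →ₗ[K] H'} (hT : T'.restrictScalars k ∘ₗ ι = ι ∘ₗ T) :
    (twist K H' hS' T').restrictScalars k ∘ₗ ι = ι ∘ₗ twist k H hS T := by
  simp only [twist, LinearMap.restrictScalars_comp, LinearMap.comp_assoc, hT]
  simp only [← LinearMap.comp_assoc, hι.antipodeInv_comp hS hS']

theorem gamma_eq_convOne_iff (hbij : Function.Bijective (ι.liftBaseChange K))
    {T : H →ₗ[k] H} {T' : H' →ₗ[K] H'} (hT : T'.restrictScalars k ∘ₗ ι = ι ∘ₗ T) (m : ℕ) :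
    gamma k H T m = convOne k H ↔ gamma K H' T' m = convOne K H' := by
  constructor
  · intro h
    apply LinearMap.ext_of_surjective_liftBaseChange hbij.2
    rw [hι.gamma_comp hT, h, hι.convOne_comp]
  · intro h
    rw [← LinearMap.cancel_left (LinearMap.injective_of_injective_liftBaseChange hbij.1),
      ← hι.gamma_comp hT, h, hι.convOne_comp]

end IsBialgHomAlong

end TwistedExponent

open TwistedExponent

/-- The base change `H ⊗_k K` is encoded as a `K`-Hopf algebra `H'` with a `k`-linear map
`ι : H → H'` preserving the bialgebra structure whose `K`-linear extension `K ⊗[k] H → H'` is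
bijective, and `τ'` is the base change of `τ`. Both exponents may be infinite, so equality means
that the same `n > 0` satisfy `Γ_{nr} = ε·1`. -/
theorem stmt10_general {k K H H' : Type*} [Field k] [Field K] [Algebra k K]
    [Ring H] [HopfAlgebra k H] [Ring H'] [HopfAlgebra K H']
    [Module k H'] [IsScalarTower k K H']
    (hS : Function.Bijective (HopfAlgebra.antipode (R := k) (A := H)))
    (hS' : Function.Bijective (HopfAlgebra.antipode (R := K) (A := H')))
    (τ : H ≃ₐc[k] H) (r : ℕ)
    (ι : H →ₗ[k] H')
    (hmul : ∀ x y : H, ι (x * y) = ι x * ι y) (hone : ι 1 = 1)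
    (hcounit : ∀ h : H, Coalgebra.counit (R := K) (ι h) =
      algebraMap k K (Coalgebra.counit (R := k) h))
    (hcomul : ∀ h : H, Coalgebra.comul (R := K) (ι h) =
      tensorIota (K := K) ι (Coalgebra.comul (R := k) h))
    (hbij : Function.Bijective (LinearMap.liftBaseChange K ι))
    (τ' : H' ≃ₐc[K] H') (hτ' : ∀ h : H, τ' (ι h) = ι (τ h)) :
    ∀ n : ℕ, 0 < n →
      (gamma k H (twist k H hS (τ : H →ₗ[k] H)) (n * r) = convOne k H ↔
        gamma K H' (twist K H' hS' (τ' : H' →ₗ[K] H')) (n * r) = convOne K H') := by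
  intro n _
  have hι : IsBialgHomAlong K ι := ⟨hmul, hone, hcounit, hcomul⟩
  let _ : Algebra k H' := algebraOfIsScalarTower k K H'
  exact hι.gamma_eq_convOne_iff hbij (hι.twist_comp hS hS' (LinearMap.ext hτ')) (n * r)

/-- Let `H` be a Hopf algebra over a field `k` with bijective antipode, `τ` a
Hopf algebra automorphism of `H` of finite order `r`, and `K` a field extension of `k`.  Then
the twisted exponent of the base-changed Hopf algebra `H ⊗_k K` with respect to `τ ⊗ Id_K`
equals `exp_τ(H)`.  (The base change is encoded as a `K`-Hopf algebra `H'` together with a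
`k`-linear multiplicative, counit- and comultiplication-preserving map `ι : H → H'` whose
`K`-linear extension `K ⊗[k] H → H'` is bijective, the automorphism `τ'` of `H'` being the
base change of `τ`, i.e. `τ' ∘ ι = ι ∘ τ`; both exponents may be infinite, equality meaning
that the same positive integers `n` satisfy the defining condition `Γ_{nr} = ε·1`.) -/
theorem stmt10 {k K H H' : Type*} [Field k] [Field K] [Algebra k K]
    [Ring H] [HopfAlgebra k H] [Ring H'] [HopfAlgebra K H']
    [Module k H'] [IsScalarTower k K H']
    (hS : Function.Bijective (HopfAlgebra.antipode (R := k) (A := H)))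
    (hS' : Function.Bijective (HopfAlgebra.antipode (R := K) (A := H')))
    (τ : H ≃ₐc[k] H) (r : ℕ) (hr : HasOrder H (⇑τ) r)
    (ι : H →ₗ[k] H')
    (hmul : ∀ x y : H, ι (x * y) = ι x * ι y) (hone : ι 1 = 1)
    (hcounit : ∀ h : H, Coalgebra.counit (R := K) (ι h) =
      algebraMap k K (Coalgebra.counit (R := k) h))
    (hcomul : ∀ h : H, Coalgebra.comul (R := K) (ι h) =
      tensorIota (K := K) ι (Coalgebra.comul (R := k) h))
    (hbij : Function.Bijective (LinearMap.liftBaseChange K ι))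
    (τ' : H' ≃ₐc[K] H') (hτ' : ∀ h : H, τ' (ι h) = ι (τ h)) :
    ∀ n : ℕ, 0 < n →
      (gamma k H (twist k H hS (τ : H →ₗ[k] H)) (n * r) = convOne k H ↔
        gamma K H' (twist K H' hS' (τ' : H' →ₗ[K] H')) (n * r) = convOne K H') :=
  stmt10_general hS hS' τ r ι hmul hone hcounit hcomul hbij τ' hτ'
end
end

section
/- Let H be a finite-dimensional Hopf algebra over a field k and τ a Hopf algebra automorphism of H of finite order r. Then the twisted exponent of the dual Hopf algebra H* with respect to the dual automorphism τ* (the transpose of τ) equals exp_τ(H): exp_{τ*}(H*) = exp_τ(H). -/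
open scoped TensorProduct

noncomputable section

open TwistedExponent

/-!
The transpose `A ↦ Φ⁻¹ ∘ Aᵀ ∘ Φ` carries `End(H)` injectively into `End(H')`. Since the
multiplication of `H'` is the transpose of `Δ` and its comultiplication the transpose of `μ`, it
turns convolution into convolution and `ε·1` into `ε·1`; it reverses composition. The antipode is
the convolution inverse of the identity, so it goes to the antipode of `H'`, and `S⁻¹` to `S'⁻¹`.
As `τ` commutes with `S`, the twist `S⁻²τ` goes to `S'⁻²τ*`, hence `Γ_m` of `H` to `Γ_m` of `H'`
for every `m`, and `Γ_m = ε·1` holds on one side exactly when it holds on the other.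
-/

open WithConv

namespace TwistedExponent

section Antipode

variable {R A B : Type*} [CommSemiring R] [Semiring A] [Semiring B]
  [HopfAlgebra R A] [HopfAlgebra R B]

theorem antipode_comp_bialgHom_s11 (f : A →ₐc[R] B) :
    HopfAlgebra.antipode R ∘ₗ (f : A →ₗ[R] B) = (f : A →ₗ[R] B) ∘ₗ HopfAlgebra.antipode R := by
  refine toConv_injective (left_inv_eq_right_inv (a := toConv (f : A →ₗ[R] B)) ?_ ?_)
  · have h := LinearMap.convMul_comp_coalgHom_distrib (toConv (HopfAlgebra.antipode R))
      (toConv LinearMap.id) (f : A →ₗc[R] B)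
    rw [LinearMap.antipode_mul_id] at h
    exact ofConv_injective (h.symm.trans (by ext; simp))
  · have h := LinearMap.algHom_comp_convMul_distrib (f : A →ₐ[R] B) (toConv LinearMap.id)
      (toConv (HopfAlgebra.antipode R))
    rw [LinearMap.id_mul_antipode] at h
    exact ofConv_injective (h.symm.trans (by ext; simp [AlgHomClass.commutes]))

end Antipode

section AntipodeInv

variable {k H : Type*} [CommRing k] [Ring H] [HopfAlgebra k H]

theorem antipodeInv_comp_comm (hS : Function.Bijective (HopfAlgebra.antipode (R := k) (A := H)))
    {T : H →ₗ[k] H} (hT : HopfAlgebra.antipode k ∘ₗ T = T ∘ₗ HopfAlgebra.antipode k) :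
    antipodeInv k H hS ∘ₗ T = T ∘ₗ antipodeInv k H hS := by
  rw [antipodeInv, LinearEquiv.eq_comp_toLinearMap_symm, LinearMap.comp_assoc,
    LinearEquiv.toLinearMap_symm_comp_eq]
  exact hT.symm

end AntipodeInv

section DualConj

variable {R M M' : Type*} [CommSemiring R] [AddCommMonoid M] [Module R M]
  [AddCommMonoid M'] [Module R M']

def dualConj (Φ : M' ≃ₗ[R] Module.Dual R M) (A : Module.End R M) : Module.End R M' :=
  Φ.symm.conj A.dualMap

variable (Φ : M' ≃ₗ[R] Module.Dual R M)

@[simp]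
theorem apply_dualConj (A : Module.End R M) (a : M') : Φ (dualConj Φ A a) = A.dualMap (Φ a) := by
  simp [dualConj, LinearEquiv.conj_apply]

theorem toLinearMap_comp_dualConj (A : Module.End R M) :
    Φ.toLinearMap ∘ₗ dualConj Φ A = A.dualMap ∘ₗ Φ.toLinearMap :=
  LinearMap.ext (apply_dualConj Φ A)

theorem dualConj_id : dualConj Φ LinearMap.id = LinearMap.id := by
  simp [dualConj]

theorem dualConj_comp (A B : Module.End R M) :
    dualConj Φ (A ∘ₗ B) = dualConj Φ B ∘ₗ dualConj Φ A := by
  rw [dualConj, ← LinearMap.dualMap_comp_dualMap, LinearEquiv.conj_comp]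
  rfl

theorem dualConj_pow (A : Module.End R M) (m : ℕ) : dualConj Φ (A ^ m) = dualConj Φ A ^ m := by
  induction m with
  | zero => exact dualConj_id Φ
  | succ m ih =>
    rw [pow_succ, pow_succ', Module.End.mul_eq_comp, Module.End.mul_eq_comp, dualConj_comp, ih]

end DualConj

theorem dualConj_injective {R M M' : Type*} [CommRing R] [AddCommGroup M] [Module R M]
    [Module.Projective R M] [AddCommMonoid M'] [Module R M'] (Φ : M' ≃ₗ[R] Module.Dual R M) :
    Function.Injective (dualConj Φ) := by
  intro A B hAB
  ext x
  rw [← sub_eq_zero, ← Module.forall_dual_apply_eq_zero_iff R]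
  intro φ
  simpa [sub_eq_zero] using congr(Φ ($hAB (Φ.symm φ)) x)

theorem dualDistrib_comp_map_dualMap {R M N M₂ N₂ : Type*} [CommSemiring R]
    [AddCommMonoid M] [Module R M] [AddCommMonoid N] [Module R N]
    [AddCommMonoid M₂] [Module R M₂] [AddCommMonoid N₂] [Module R N₂]
    (f : M →ₗ[R] M₂) (g : N →ₗ[R] N₂) :
    TensorProduct.dualDistrib R M N ∘ₗ TensorProduct.map f.dualMap g.dualMap =
      (TensorProduct.map f g).dualMap ∘ₗ TensorProduct.dualDistrib R M₂ N₂ := by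
  ext φ ψ x y
  simp [TensorProduct.dualDistrib_apply]

section Transpose

variable {k H H' : Type*} [CommRing k] [Ring H] [HopfAlgebra k H] [Ring H'] [HopfAlgebra k H']
  (Φ : H' ≃ₗ[k] Module.Dual k H)

variable (hone : Φ 1 = Coalgebra.counit (R := k) (A := H))
  (hcounit : ∀ a : H', Coalgebra.counit (R := k) a = Φ a 1)
  (hmul : ∀ a b : H', Φ (a * b) =
    (Coalgebra.comul (R := k) (A := H)).dualMap
      (TensorProduct.dualDistrib k H H (Φ a ⊗ₜ[k] Φ b)))
  (hcomul : ∀ a : H',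
    TensorProduct.dualDistrib k H H
      (TensorProduct.map Φ.toLinearMap Φ.toLinearMap (Coalgebra.comul (R := k) a)) =
    (LinearMap.mul' k H).dualMap (Φ a))

include hone hcounit in
theorem dualConj_convOne : dualConj Φ (convOne k H) = convOne k H' := by
  ext a : 1
  apply Φ.injective
  ext x
  simp [convOne, Algebra.algebraMap_eq_smul_one, hone, hcounit, mul_comm]

include hmul hcomul in
theorem dualConj_conv (A B : Module.End k H) :
    dualConj Φ (conv k H A B) = conv k H' (dualConj Φ A) (dualConj Φ B) := by
  have hmul' : Φ.toLinearMap ∘ₗ LinearMap.mul' k H' = Coalgebra.comul.dualMap ∘ₗ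
      TensorProduct.dualDistrib k H H ∘ₗ TensorProduct.map Φ.toLinearMap Φ.toLinearMap :=
    TensorProduct.ext' fun a b => by simpa using hmul a b
  have hcomul' : TensorProduct.dualDistrib k H H ∘ₗ
      TensorProduct.map Φ.toLinearMap Φ.toLinearMap ∘ₗ Coalgebra.comul =
        (LinearMap.mul' k H).dualMap ∘ₗ Φ.toLinearMap :=
    LinearMap.ext hcomul
  apply (LinearMap.cancel_left Φ.injective).mp
  symm
  calc Φ.toLinearMap ∘ₗ conv k H' (dualConj Φ A) (dualConj Φ B)
      = Coalgebra.comul.dualMap ∘ₗ TensorProduct.dualDistrib k H H ∘ₗ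
          (TensorProduct.map Φ.toLinearMap Φ.toLinearMap ∘ₗ
            TensorProduct.map (dualConj Φ A) (dualConj Φ B)) ∘ₗ Coalgebra.comul := by
        simp only [conv, ← LinearMap.comp_assoc, hmul']
    _ = Coalgebra.comul.dualMap ∘ₗ (TensorProduct.dualDistrib k H H ∘ₗ
          TensorProduct.map A.dualMap B.dualMap) ∘ₗ
            TensorProduct.map Φ.toLinearMap Φ.toLinearMap ∘ₗ Coalgebra.comul := by
        rw [← TensorProduct.map_comp, toLinearMap_comp_dualConj, toLinearMap_comp_dualConj,
          TensorProduct.map_comp]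
        simp only [LinearMap.comp_assoc]
    _ = Coalgebra.comul.dualMap ∘ₗ (TensorProduct.map A B).dualMap ∘ₗ
          (LinearMap.mul' k H).dualMap ∘ₗ Φ.toLinearMap := by
        rw [dualDistrib_comp_map_dualMap, LinearMap.comp_assoc, hcomul']
    _ = Φ.toLinearMap ∘ₗ dualConj Φ (conv k H A B) := by
        rw [toLinearMap_comp_dualConj, conv, ← LinearMap.dualMap_comp_dualMap,
          ← LinearMap.dualMap_comp_dualMap]
        simp only [LinearMap.comp_assoc]

include hone hcounit hmul hcomul in
theorem dualConj_gamma (T : Module.End k H) (m : ℕ) :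
    dualConj Φ (gamma k H T m) = gamma k H' (dualConj Φ T) m := by
  induction m with
  | zero => exact dualConj_convOne Φ hone hcounit
  | succ m ih => rw [gamma, gamma, dualConj_conv Φ hmul hcomul, ih, dualConj_pow]

include hone hcounit hmul hcomul in
theorem dualConj_antipode : dualConj Φ (HopfAlgebra.antipode k) = HopfAlgebra.antipode k := by
  refine (toConv_injective (left_inv_eq_right_inv (a := toConv LinearMap.id)
    LinearMap.antipode_mul_id (ofConv_injective ?_))).symm
  change conv k H' LinearMap.id (dualConj Φ (HopfAlgebra.antipode k)) = convOne k H'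
  rw [← dualConj_id Φ, ← dualConj_conv Φ hmul hcomul, ← dualConj_convOne Φ hone hcounit]
  exact congrArg (dualConj Φ) congr(ofConv $(LinearMap.id_mul_antipode (R := k) (C := H)))

include hone hcounit hmul hcomul in
theorem dualConj_antipodeInv (hS : Function.Bijective (HopfAlgebra.antipode (R := k) (A := H)))
    (hS' : Function.Bijective (HopfAlgebra.antipode (R := k) (A := H'))) :
    dualConj Φ (antipodeInv k H hS) = antipodeInv k H' hS' := by
  rw [antipodeInv, antipodeInv,
    ← LinearMap.id_comp (LinearEquiv.ofBijective _ hS').symm.toLinearMap,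
    LinearEquiv.eq_comp_toLinearMap_symm]
  change _ ∘ₗ HopfAlgebra.antipode k = _
  rw [← dualConj_antipode Φ hone hcounit hmul hcomul, ← dualConj_comp, ← dualConj_id Φ]
  exact congrArg (dualConj Φ) (LinearMap.ext (LinearEquiv.ofBijective _ hS).apply_symm_apply)

include hone hcounit hmul hcomul in
theorem dualConj_twist (hS : Function.Bijective (HopfAlgebra.antipode (R := k) (A := H)))
    (hS' : Function.Bijective (HopfAlgebra.antipode (R := k) (A := H')))
    {T : Module.End k H} (hT : HopfAlgebra.antipode k ∘ₗ T = T ∘ₗ HopfAlgebra.antipode k) :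
    dualConj Φ (twist k H hS T) = twist k H' hS' (dualConj Φ T) := by
  have hcomm := antipodeInv_comp_comm hS hT
  rw [twist, twist, hcomm, ← LinearMap.comp_assoc, hcomm, LinearMap.comp_assoc, dualConj_comp,
    dualConj_comp, dualConj_antipodeInv Φ hone hcounit hmul hcomul hS hS', LinearMap.comp_assoc]

end Transpose

end TwistedExponent

/-- `H'` stands for `H*` through `Φ`; the possibly infinite exponents are compared through their
defining condition `Γ_{nr} = ε·1`, one `n > 0` at a time. -/
theorem stmt11_general {k H H' : Type*} [Field k] [Ring H] [HopfAlgebra k H]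
    [Ring H'] [HopfAlgebra k H']
    (hS : Function.Bijective (HopfAlgebra.antipode (R := k) (A := H)))
    (hS' : Function.Bijective (HopfAlgebra.antipode (R := k) (A := H')))
    (τ : H ≃ₐc[k] H) (r : ℕ)
    (Φ : H' ≃ₗ[k] Module.Dual k H)
    (hone : Φ 1 = Coalgebra.counit (R := k) (A := H))
    (hmul : ∀ a b : H', Φ (a * b) =
      (Coalgebra.comul (R := k) (A := H)).dualMap
        (TensorProduct.dualDistrib k H H (Φ a ⊗ₜ[k] Φ b)))
    (hcounit : ∀ a : H', Coalgebra.counit (R := k) a = Φ a 1)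
    (hcomul : ∀ a : H',
      TensorProduct.dualDistrib k H H
        (TensorProduct.map Φ.toLinearMap Φ.toLinearMap (Coalgebra.comul (R := k) a)) =
      (LinearMap.mul' k H).dualMap (Φ a))
    (τ' : H' ≃ₐc[k] H')
    (hτ' : ∀ a : H', Φ (τ' a) = (τ : H →ₗ[k] H).dualMap (Φ a)) :
    ∀ n : ℕ, 0 < n →
      (gamma k H (twist k H hS (τ : H →ₗ[k] H)) (n * r) = convOne k H ↔
        gamma k H' (twist k H' hS' (τ' : H' →ₗ[k] H')) (n * r) = convOne k H') := by
  intro n _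
  have hτ : dualConj Φ (τ : H →ₗ[k] H) = τ' := LinearMap.ext fun a => Φ.injective (by simp [hτ'])
  have htwist : dualConj Φ (twist k H hS τ) = twist k H' hS' τ' := by
    have hτS : HopfAlgebra.antipode k ∘ₗ (τ : H →ₗ[k] H) =
        (τ : H →ₗ[k] H) ∘ₗ HopfAlgebra.antipode k :=
      antipode_comp_bialgHom_s11 (τ : H →ₐc[k] H)
    rw [dualConj_twist Φ hone hcounit hmul hcomul hS hS' hτS, hτ]
  rw [← htwist, ← dualConj_gamma Φ hone hcounit hmul hcomul, ← dualConj_convOne Φ hone hcounit,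
    (dualConj_injective Φ).eq_iff]

/-- Let `H` be a finite-dimensional Hopf algebra over a field `k` and `τ` a
Hopf algebra automorphism of `H` of finite order `r`.  Then the twisted exponent of the dual
Hopf algebra `H*` with respect to the dual automorphism `τ*` equals `exp_τ(H)`.  (The dual Hopf
algebra is encoded as a Hopf algebra `H'` with a linear equivalence `Φ : H' ≃ H* = Dual k H`
under which the unit of `H'` is `ε`, multiplication is convolution (the transpose of `Δ`),
the counit is evaluation at `1`, comultiplication is the transpose of `μ`, and `τ'` corresponds
to the transpose `τ*` of `τ`; both exponents may be infinite, equality meaning that the same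
positive integers `n` satisfy the defining condition `Γ_{nr} = ε·1`.) -/
theorem stmt11 {k H H' : Type*} [Field k] [Ring H] [HopfAlgebra k H] [FiniteDimensional k H]
    [Ring H'] [HopfAlgebra k H']
    (hS : Function.Bijective (HopfAlgebra.antipode (R := k) (A := H)))
    (hS' : Function.Bijective (HopfAlgebra.antipode (R := k) (A := H')))
    (τ : H ≃ₐc[k] H) (r : ℕ) (hr : HasOrder H (⇑τ) r)
    (Φ : H' ≃ₗ[k] Module.Dual k H)
    (hone : Φ 1 = Coalgebra.counit (R := k) (A := H))
    (hmul : ∀ a b : H', Φ (a * b) =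
      (Coalgebra.comul (R := k) (A := H)).dualMap
        (TensorProduct.dualDistrib k H H (Φ a ⊗ₜ[k] Φ b)))
    (hcounit : ∀ a : H', Coalgebra.counit (R := k) a = Φ a 1)
    (hcomul : ∀ a : H',
      TensorProduct.dualDistrib k H H
        (TensorProduct.map Φ.toLinearMap Φ.toLinearMap (Coalgebra.comul (R := k) a)) =
      (LinearMap.mul' k H).dualMap (Φ a))
    (τ' : H' ≃ₐc[k] H')
    (hτ' : ∀ a : H', Φ (τ' a) = (τ : H →ₗ[k] H).dualMap (Φ a)) :
    ∀ n : ℕ, 0 < n →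
      (gamma k H (twist k H hS (τ : H →ₗ[k] H)) (n * r) = convOne k H ↔
        gamma k H' (twist k H' hS' (τ' : H' →ₗ[k] H')) (n * r) = convOne k H') :=
  stmt11_general hS hS' τ r Φ hone hmul hcounit hcomul τ' hτ'
end
end

section
/- Let H be a finite-dimensional involutory Hopf algebra (S² = Id) over a field k, τ a Hopf algebra automorphism of H of finite order r, and V a finite-dimensional left H-module. Let q_τ = ∏_{i=0}^{r-1} (Id_H ⊗ (τ*)^i)(coev(1)) ∈ H ⊗ H*, i.e. q_τ = Σ b_{i₁}⋯b_{i_r} ⊗ b*_{i₁}·τ*(b*_{i₂})⋯(τ*)^{r-1}(b*_{i_r}) for a basis (b_i) of H with dual basis (b*_i). Then the multiplicative order of the operator given by left multiplication by q_τ on V ⊗ H* (where H* acts on itself by left convolution multiplication) equals the twisted exponent exp_τ(V). -/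
open scoped TensorProduct

noncomputable section

open TwistedExponent

namespace TwistedExponent

/-- The map `Γ_m` acts on the `H`-module `V` as `ε·Id_V`. -/
def GammaTrivOn {k H : Type*} [CommRing k] [Ring H] [HopfAlgebra k H] (T : H →ₗ[k] H) (m : ℕ)
    (V : Type*) [AddCommGroup V] [Module k V] [Module H V] [IsScalarTower k H V] : Prop :=
  ∀ (h : H) (v : V), gamma k H T m h • v = Coalgebra.counit (R := k) h • v

section Dual

variable (k H : Type*) [Field k] [Ring H] [HopfAlgebra k H]

/-- Convolution multiplication on the dual `H* = Dual k H` (the transpose of `Δ`),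
as a linear map `H* ⊗ H* → H*`. -/
def dualMul : Module.Dual k H ⊗[k] Module.Dual k H →ₗ[k] Module.Dual k H :=
  (Coalgebra.comul (R := k) (A := H)).dualMap ∘ₗ TensorProduct.dualDistrib k H H

/-- Multiplication on `H ⊗ H*` (tensor product of the algebra `H` with the convolution
algebra `H*`), as a linear map. -/
def mulHD : (H ⊗[k] Module.Dual k H) ⊗[k] (H ⊗[k] Module.Dual k H) →ₗ[k]
    H ⊗[k] Module.Dual k H :=
  TensorProduct.map (LinearMap.mul' k H) (dualMul k H) ∘ₗ
    (TensorProduct.tensorTensorTensorComm k H (Module.Dual k H) H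
      (Module.Dual k H)).toLinearMap

/-- The product of a list of elements of `H ⊗ H*` (in order), with empty product `1 ⊗ ε`. -/
def listProdHD : List (H ⊗[k] Module.Dual k H) → H ⊗[k] Module.Dual k H
  | [] => 1 ⊗ₜ[k] (Coalgebra.counit (R := k) (A := H))
  | (a :: l) => mulHD k H (a ⊗ₜ[k] listProdHD l)

/-- The element `q_τ = ∏_{i=0}^{r-1} (Id_H ⊗ (τ*)^i)(coev(1)) ∈ H ⊗ H*`,
i.e. `q_τ = Σ b_{i₁}⋯b_{i_r} ⊗ b*_{i₁}·τ*(b*_{i₂})⋯(τ*)^{r-1}(b*_{i_r})`. -/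
def qElem [FiniteDimensional k H] (τ : H →ₗ[k] H) (r : ℕ) : H ⊗[k] Module.Dual k H :=
  listProdHD k H <| (List.range r).map fun i =>
    TensorProduct.map LinearMap.id (τ ^ i).dualMap (coevaluation k H 1)

/-- The action of `H` on a module `V`, as a linear map `H ⊗ V → V`. -/
def smulMap (V : Type*) [AddCommGroup V] [Module k V] [Module H V] [IsScalarTower k H V] :
    H ⊗[k] V →ₗ[k] V :=
  TensorProduct.lift <| LinearMap.mk₂ k (fun h v => h • v)
    (fun h₁ h₂ v => add_smul h₁ h₂ v)
    (fun a h v => smul_assoc a h v)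
    (fun h v₁ v₂ => smul_add h v₁ v₂)
    (fun a h v => by
      show h • (a • v) = a • (h • v)
      rw [algebra_compatible_smul H a v, ← mul_smul, ← Algebra.commutes, mul_smul,
        ← algebra_compatible_smul])

/-- Left multiplication by an element `q ∈ H ⊗ H*` on `V ⊗ H*`, where `H` acts on `V` and
`H*` acts on itself by left (convolution) multiplication. -/
def leftMulOn (V : Type*) [AddCommGroup V] [Module k V] [Module H V] [IsScalarTower k H V]
    (q : H ⊗[k] Module.Dual k H) :
    (V ⊗[k] Module.Dual k H) →ₗ[k] (V ⊗[k] Module.Dual k H) :=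
  TensorProduct.map (smulMap k H V) (dualMul k H) ∘ₗ
    (TensorProduct.tensorTensorTensorComm k H (Module.Dual k H) V
      (Module.Dual k H)).toLinearMap ∘ₗ
    TensorProduct.mk k (H ⊗[k] Module.Dual k H) (V ⊗[k] Module.Dual k H) q

end Dual

end TwistedExponent

/-! ### Auxiliary development for `stmt13` -/

namespace Stmt13Aux

set_option maxHeartbeats 1000000
set_option synthInstance.maxHeartbeats 400000

open TensorProduct LinearMap Coalgebra TwistedExponent

section ConvGeneric

variable {k C A : Type*} [CommRing k] [AddCommGroup C] [Module k C] [Coalgebra k C]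
  [Ring A] [Algebra k A]

/-- convolution product, generic in the target algebra -/
noncomputable def cmul (f g : C →ₗ[k] A) : C →ₗ[k] A :=
  LinearMap.mul' k A ∘ₗ TensorProduct.map f g ∘ₗ Coalgebra.comul

/-- convolution unit -/
noncomputable def cone : C →ₗ[k] A := Algebra.linearMap k A ∘ₗ Coalgebra.counit

lemma rT_eq {M N P : Type*} [AddCommGroup M] [AddCommGroup N] [AddCommGroup P]
    [Module k M] [Module k N] [Module k P] (f : N →ₗ[k] P) :
    f.rTensor M = TensorProduct.map f LinearMap.id := rfl

lemma lT_eq {M N P : Type*} [AddCommGroup M] [AddCommGroup N] [AddCommGroup P]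
    [Module k M] [Module k N] [Module k P] (f : N →ₗ[k] P) :
    f.lTensor M = TensorProduct.map LinearMap.id f := rfl

lemma cmul_apply (f g : C →ₗ[k] A) (a : C) :
    cmul f g a = LinearMap.mul' k A (TensorProduct.map f g (Coalgebra.comul (R := k) a)) := rfl

lemma mul'_assoc :
    mul' k A ∘ₗ (mul' k A).rTensor A =
      (mul' k A ∘ₗ (mul' k A).lTensor A) ∘ₗ (TensorProduct.assoc k A A A).toLinearMap := by
  apply TensorProduct.ext_threefold
  intro x y z
  simp [mul_assoc]

lemma mul'_assoc_apply (x : (A ⊗[k] A) ⊗[k] A) :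
    mul' k A ((mul' k A).rTensor A x) =
      mul' k A ((mul' k A).lTensor A (TensorProduct.assoc k A A A x)) := by
  have := DFunLike.congr_fun (mul'_assoc (k := k) (A := A)) x
  simpa using this

lemma map_cmul_left (f g h : C →ₗ[k] A) :
    TensorProduct.map (cmul f g) h =
      ((mul' k A).rTensor A ∘ₗ TensorProduct.map (TensorProduct.map f g) h) ∘ₗ
        (Coalgebra.comul (R := k) (A := C)).rTensor C := by
  rw [cmul, rT_eq, rT_eq]
  calc TensorProduct.map ((mul' k A ∘ₗ TensorProduct.map f g ∘ₗ comul)) h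
      = TensorProduct.map (mul' k A ∘ₗ (TensorProduct.map f g ∘ₗ comul)) (LinearMap.id ∘ₗ h) := by
        rw [id_comp]
    _ = TensorProduct.map (mul' k A) LinearMap.id ∘ₗ
          TensorProduct.map (TensorProduct.map f g ∘ₗ comul) h := TensorProduct.map_comp _ _ _ _
    _ = TensorProduct.map (mul' k A) LinearMap.id ∘ₗ
          TensorProduct.map (TensorProduct.map f g ∘ₗ comul) (h ∘ₗ LinearMap.id) := by
        rw [comp_id]
    _ = TensorProduct.map (mul' k A) LinearMap.id ∘ₗ
          (TensorProduct.map (TensorProduct.map f g) h ∘ₗ TensorProduct.map comul LinearMap.id) := by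
        rw [TensorProduct.map_comp]
    _ = _ := by rw [comp_assoc]

lemma map_cmul_right (f g h : C →ₗ[k] A) :
    TensorProduct.map f (cmul g h) =
      ((mul' k A).lTensor A ∘ₗ TensorProduct.map f (TensorProduct.map g h)) ∘ₗ
        (Coalgebra.comul (R := k) (A := C)).lTensor C := by
  rw [cmul, lT_eq, lT_eq]
  calc TensorProduct.map f ((mul' k A ∘ₗ TensorProduct.map g h ∘ₗ comul))
      = TensorProduct.map (LinearMap.id ∘ₗ f) (mul' k A ∘ₗ (TensorProduct.map g h ∘ₗ comul)) := by
        rw [id_comp]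
    _ = TensorProduct.map LinearMap.id (mul' k A) ∘ₗ
          TensorProduct.map f (TensorProduct.map g h ∘ₗ comul) := TensorProduct.map_comp _ _ _ _
    _ = TensorProduct.map LinearMap.id (mul' k A) ∘ₗ
          TensorProduct.map (f ∘ₗ LinearMap.id) (TensorProduct.map g h ∘ₗ comul) := by
        rw [comp_id]
    _ = TensorProduct.map LinearMap.id (mul' k A) ∘ₗ
          (TensorProduct.map f (TensorProduct.map g h) ∘ₗ TensorProduct.map LinearMap.id comul) := by
        rw [TensorProduct.map_comp]
    _ = _ := by rw [comp_assoc]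

lemma cmul_assoc (f g h : C →ₗ[k] A) : cmul (cmul f g) h = cmul f (cmul g h) := by
  ext a
  show mul' k A (TensorProduct.map (cmul f g) h (comul a)) =
    mul' k A (TensorProduct.map f (cmul g h) (comul a))
  rw [map_cmul_left, map_cmul_right]
  simp only [comp_apply]
  rw [mul'_assoc_apply, ← TensorProduct.map_map_assoc, Coalgebra.coassoc_apply]

lemma cone_cmul (f : C →ₗ[k] A) : cmul cone f = f := by
  ext a
  show mul' k A (TensorProduct.map cone f (comul a)) = f a
  have e1 : TensorProduct.map (cone (k := k) (C := C) (A := A)) f =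
      TensorProduct.map (Algebra.linearMap k A) f ∘ₗ
        (Coalgebra.counit (R := k) (A := C)).rTensor C := by
    rw [cone, rT_eq]
    calc TensorProduct.map (Algebra.linearMap k A ∘ₗ counit) f
        = TensorProduct.map (Algebra.linearMap k A ∘ₗ counit) (f ∘ₗ LinearMap.id) := by
          rw [comp_id]
      _ = _ := TensorProduct.map_comp _ _ _ _
  rw [e1]
  simp only [comp_apply, Coalgebra.rTensor_counit_comul]
  simp

lemma cmul_cone (f : C →ₗ[k] A) : cmul f cone = f := by
  ext a
  show mul' k A (TensorProduct.map f cone (comul a)) = f a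
  have e1 : TensorProduct.map f (cone (k := k) (C := C) (A := A)) =
      TensorProduct.map f (Algebra.linearMap k A) ∘ₗ
        (Coalgebra.counit (R := k) (A := C)).lTensor C := by
    rw [cone, lT_eq]
    calc TensorProduct.map f (Algebra.linearMap k A ∘ₗ counit)
        = TensorProduct.map (f ∘ₗ LinearMap.id) (Algebra.linearMap k A ∘ₗ counit) := by
          rw [comp_id]
      _ = _ := TensorProduct.map_comp _ _ _ _
  rw [e1]
  simp only [comp_apply, Coalgebra.lTensor_counit_comul]
  simp

lemma cmul_comp (f g : C →ₗ[k] A) (T : C →ₗ[k] C)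
    (hT : Coalgebra.comul ∘ₗ T = TensorProduct.map T T ∘ₗ Coalgebra.comul (R := k)) :
    cmul f g ∘ₗ T = cmul (f ∘ₗ T) (g ∘ₗ T) := by
  ext a
  show mul' k A (TensorProduct.map f g (comul (T a))) =
    mul' k A (TensorProduct.map (f ∘ₗ T) (g ∘ₗ T) (comul a))
  rw [TensorProduct.map_comp]
  simp only [comp_apply]
  rw [show (comul (T a) : C ⊗[k] C) = TensorProduct.map T T (comul a) from
    DFunLike.congr_fun hT a]

lemma cone_comp (T : C →ₗ[k] C)
    (hT : Coalgebra.counit ∘ₗ T = Coalgebra.counit (R := k)) :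
    (cone (k := k) (C := C) (A := A)) ∘ₗ T = cone := by
  ext a
  show Algebra.linearMap k A (counit (T a)) = Algebra.linearMap k A (counit a)
  rw [show (counit (T a) : k) = counit a from DFunLike.congr_fun hT a]

lemma cmul_add_left (f f' g : C →ₗ[k] A) : cmul (f + f') g = cmul f g + cmul f' g := by
  rw [cmul, cmul, cmul, TensorProduct.map_add_left, add_comp, comp_add]

lemma cmul_add_right (f g g' : C →ₗ[k] A) : cmul f (g + g') = cmul f g + cmul f g' := by
  rw [cmul, cmul, cmul, TensorProduct.map_add_right, add_comp, comp_add]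

lemma cmul_zero_left (g : C →ₗ[k] A) : cmul (0 : C →ₗ[k] A) g = 0 := by
  ext a; simp [cmul_apply]

lemma cmul_zero_right (f : C →ₗ[k] A) : cmul f (0 : C →ₗ[k] A) = 0 := by
  ext a; simp [cmul_apply]

end ConvGeneric

section GammaAux

variable {k H : Type*} [CommRing k] [Ring H] [HopfAlgebra k H]

lemma conv_eq (f g : H →ₗ[k] H) : conv k H f g = cmul f g := rfl

lemma convOne_eq : convOne k H = cone := rfl

variable (T : H →ₗ[k] H)

lemma pow_comul (hΔ : Coalgebra.comul ∘ₗ T = TensorProduct.map T T ∘ₗ Coalgebra.comul (R := k))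
    (i : ℕ) :
    Coalgebra.comul ∘ₗ T ^ i = TensorProduct.map (T ^ i) (T ^ i) ∘ₗ Coalgebra.comul (R := k) := by
  induction i with
  | zero => rw [pow_zero, Module.End.one_eq_id, comp_id, TensorProduct.map_id, id_comp]
  | succ i ih =>
      rw [pow_succ, Module.End.mul_eq_comp, ← comp_assoc, ih, comp_assoc, hΔ, ← comp_assoc,
        ← TensorProduct.map_comp, ← Module.End.mul_eq_comp, ← pow_succ]

lemma pow_counit (hε : Coalgebra.counit ∘ₗ T = Coalgebra.counit (R := k)) (i : ℕ) :
    Coalgebra.counit ∘ₗ T ^ i = Coalgebra.counit (R := k) := by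
  induction i with
  | zero => rw [pow_zero, Module.End.one_eq_id, comp_id]
  | succ i ih => rw [pow_succ, Module.End.mul_eq_comp, ← comp_assoc, ih, hε]

lemma gamma_succ (m : ℕ) : gamma k H T (m + 1) = cmul (gamma k H T m) (T ^ m) := rfl

lemma gamma_zero : gamma k H T 0 = cone := rfl

lemma gamma_one : gamma k H T 1 = LinearMap.id := by
  rw [gamma_succ, gamma_zero, pow_zero, Module.End.one_eq_id]
  exact cone_cmul _

variable (hΔ : Coalgebra.comul ∘ₗ T = TensorProduct.map T T ∘ₗ Coalgebra.comul (R := k))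
  (hε : Coalgebra.counit ∘ₗ T = Coalgebra.counit (R := k))

include hΔ hε

lemma gamma_add (m n : ℕ) :
    gamma k H T (m + n) = cmul (gamma k H T m) (gamma k H T n ∘ₗ T ^ m) := by
  induction n with
  | zero =>
      rw [Nat.add_zero, gamma_zero, cone_comp _ (pow_counit T hε m), cmul_cone]
  | succ n ih =>
      rw [show m + (n + 1) = (m + n) + 1 from rfl, gamma_succ, ih, cmul_assoc, gamma_succ,
        cmul_comp _ _ _ (pow_comul T hΔ m),
        show (T ^ n) ∘ₗ T ^ m = T ^ (m + n) from by
          rw [← Module.End.mul_eq_comp, ← pow_add, Nat.add_comm]]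

lemma gamma_shift (n m : ℕ) :
    cmul (T ^ m) (gamma k H T n ∘ₗ T ^ (m + 1)) = gamma k H T (n + 1) ∘ₗ T ^ m := by
  induction n generalizing m with
  | zero =>
      rw [gamma_zero, cone_comp _ (pow_counit T hε (m + 1)), cmul_cone, gamma_one, id_comp]
  | succ n ih =>
      rw [gamma_succ, cmul_comp _ _ _ (pow_comul T hΔ (m + 1)),
        show (T ^ n) ∘ₗ T ^ (m + 1) = T ^ (n + (m + 1)) from by
          rw [← Module.End.mul_eq_comp, ← pow_add],
        ← cmul_assoc, ih m,
        show T ^ (n + (m + 1)) = (T ^ (n + 1)) ∘ₗ T ^ m from by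
          rw [show n + (m + 1) = (n + 1) + m by omega, pow_add, Module.End.mul_eq_comp],
        ← cmul_comp _ _ _ (pow_comul T hΔ m)]
      rfl

lemma fold_range (n m : ℕ) :
    ((List.range n).foldr (fun i G => cmul (T ^ (i + m)) G) cone) = gamma k H T n ∘ₗ T ^ m := by
  induction n generalizing m with
  | zero =>
      rw [List.range_zero, List.foldr_nil, gamma_zero]
      exact (cone_comp _ (pow_counit T hε m)).symm
  | succ n ih =>
      rw [List.range_succ_eq_map, List.foldr_cons, List.foldr_map]
      have e : (fun (i : ℕ) (G : H →ₗ[k] H) => cmul (T ^ (i + 1 + m)) G) =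
          fun i G => cmul (T ^ (i + (m + 1))) G := by
        funext i G; rw [show i + 1 + m = i + (m + 1) by omega]
      rw [e, ih (m + 1), Nat.zero_add, gamma_shift T hΔ hε]

end GammaAux

section DualAux

variable {k H : Type*} [Field k] [Ring H] [HopfAlgebra k H]

lemma dualMul_tmul (g f : Module.Dual k H) :
    dualMul k H (g ⊗ₜ[k] f) = cmul g f := by
  ext h
  show (Coalgebra.comul (R := k) (A := H)).dualMap (TensorProduct.dualDistrib k H H (g ⊗ₜ f)) h =
    cmul g f h
  rw [LinearMap.dualMap_apply, cmul_apply]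
  induction (Coalgebra.comul (R := k) h) using TensorProduct.induction_on with
  | zero => simp
  | tmul x y => simp [TensorProduct.dualDistrib_apply, LinearMap.mul'_apply]
  | add x y hx hy => simp only [map_add, hx, hy]

/-- `H ⊗ H* → End H`, `a ⊗ g ↦ (h ↦ g h • a)`. -/
noncomputable def tilde : H ⊗[k] Module.Dual k H →ₗ[k] (H →ₗ[k] H) :=
  dualTensorHom k H H ∘ₗ (TensorProduct.comm k H (Module.Dual k H)).toLinearMap

lemma tilde_tmul (a : H) (g : Module.Dual k H) (h : H) :
    tilde (a ⊗ₜ[k] g) h = g h • a := by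
  simp [tilde, dualTensorHom_apply]

lemma mulHD_tmul (a b : H) (g f : Module.Dual k H) :
    mulHD k H ((a ⊗ₜ[k] g) ⊗ₜ[k] (b ⊗ₜ[k] f)) = (a * b) ⊗ₜ[k] dualMul k H (g ⊗ₜ[k] f) := by
  simp [mulHD, TensorProduct.tensorTensorTensorComm_tmul, LinearMap.mul'_apply]

lemma tilde_one :
    tilde ((1 : H) ⊗ₜ[k] (Coalgebra.counit (R := k) (A := H))) = cone := by
  ext h
  rw [tilde_tmul]
  show _ = Algebra.linearMap k H (Coalgebra.counit (R := k) h)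
  rw [Algebra.linearMap_apply, Algebra.algebraMap_eq_smul_one]

lemma tilde_mulHD (q p : H ⊗[k] Module.Dual k H) :
    tilde (mulHD k H (q ⊗ₜ[k] p)) = cmul (tilde q) (tilde p) := by
  induction q using TensorProduct.induction_on with
  | zero => simp [cmul_zero_left]
  | add q1 q2 h1 h2 =>
      rw [TensorProduct.add_tmul, map_add, map_add, map_add, h1, h2, cmul_add_left]
  | tmul a g =>
      induction p using TensorProduct.induction_on with
      | zero => simp [cmul_zero_right]
      | add p1 p2 h1 h2 =>
          rw [TensorProduct.tmul_add, map_add, map_add, map_add, h1, h2, cmul_add_right]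
      | tmul b f =>
          rw [mulHD_tmul, dualMul_tmul]
          ext h
          rw [tilde_tmul, cmul_apply, cmul_apply]
          induction (Coalgebra.comul (R := k) h) using TensorProduct.induction_on with
          | zero => simp
          | tmul x y =>
              rw [TensorProduct.map_tmul, TensorProduct.map_tmul, LinearMap.mul'_apply,
                LinearMap.mul'_apply, tilde_tmul, tilde_tmul, smul_mul_assoc, mul_smul_comm,
                smul_smul]
          | add x y hx hy => rw [map_add, map_add, map_add, map_add, add_smul, hx, hy]

lemma tilde_coev [FiniteDimensional k H] (T : H →ₗ[k] H) :
    tilde (TensorProduct.map LinearMap.id T.dualMap (coevaluation k H 1)) = T := by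
  ext h
  rw [coevaluation_apply_one]
  simp only [map_sum, TensorProduct.map_tmul, LinearMap.id_coe, id_eq, LinearMap.coe_sum,
    Finset.sum_apply]
  have e : ∀ i : Module.Basis.ofVectorSpaceIndex k H,
      tilde ((Module.Basis.ofVectorSpace k H) i ⊗ₜ[k] T.dualMap ((Module.Basis.ofVectorSpace k H).coord i)) h =
        ((Module.Basis.ofVectorSpace k H).repr (T h)) i • (Module.Basis.ofVectorSpace k H) i := by
    intro i
    rw [tilde_tmul, LinearMap.dualMap_apply, Module.Basis.coord_apply]
  rw [Finset.sum_congr rfl fun i _ => e i]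
  exact (Module.Basis.ofVectorSpace k H).sum_repr (T h)

variable (V : Type*) [AddCommGroup V] [Module k V] [Module H V] [IsScalarTower k H V]

/-- `V ⊗ H* → Hom(H, V)`, `v ⊗ f ↦ (h ↦ f h • v)`. -/
noncomputable def evE : V ⊗[k] Module.Dual k H →ₗ[k] (H →ₗ[k] V) :=
  dualTensorHom k H V ∘ₗ (TensorProduct.comm k V (Module.Dual k H)).toLinearMap

lemma evE_tmul (v : V) (f : Module.Dual k H) (h : H) :
    evE V (v ⊗ₜ[k] f) h = f h • v := by
  simp [evE, dualTensorHom_apply]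

lemma evE_injective [FiniteDimensional k H] : Function.Injective (evE (k := k) (H := H) V) := by
  have hd : Function.Injective (dualTensorHom k H V) := by
    intro x y hxy
    classical
    have hx := dualTensorHomEquivOfBasis_symm_cancel_left (N := V)
      (Module.Free.chooseBasis k H) x
    have hy := dualTensorHomEquivOfBasis_symm_cancel_left (N := V)
      (Module.Free.chooseBasis k H) y
    rw [← hx, ← hy, hxy]
  exact fun x y hxy => (TensorProduct.comm k V (Module.Dual k H)).injective
    (hd (by simpa [evE] using hxy))

lemma smulMap_tmul (a : H) (v : V) : smulMap k H V (a ⊗ₜ[k] v) = a • v := rfl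

lemma ksmul_comm (c : k) (a : H) (v : V) : a • (c • v) = c • (a • v) := by
  rw [algebra_compatible_smul H c v, ← mul_smul, ← Algebra.commutes, mul_smul,
    ← algebra_compatible_smul]

lemma leftMulOn_apply (q : H ⊗[k] Module.Dual k H) (x : V ⊗[k] Module.Dual k H) :
    leftMulOn k H V q x = TensorProduct.map (smulMap k H V) (dualMul k H)
      ((TensorProduct.tensorTensorTensorComm k H (Module.Dual k H) V (Module.Dual k H))
        (q ⊗ₜ[k] x)) := rfl

lemma leftMulOn_add_q (q q' : H ⊗[k] Module.Dual k H) (x : V ⊗[k] Module.Dual k H) :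
    leftMulOn k H V (q + q') x = leftMulOn k H V q x + leftMulOn k H V q' x := by
  rw [leftMulOn_apply, leftMulOn_apply, leftMulOn_apply, TensorProduct.add_tmul, map_add, map_add]

lemma leftMulOn_zero_q (x : V ⊗[k] Module.Dual k H) :
    leftMulOn k H V (0 : H ⊗[k] Module.Dual k H) x = 0 := by
  rw [leftMulOn_apply, TensorProduct.zero_tmul, map_zero, map_zero]

lemma leftMulOn_tmul (a : H) (g : Module.Dual k H) (v : V) (f : Module.Dual k H) :
    leftMulOn k H V (a ⊗ₜ[k] g) (v ⊗ₜ[k] f) = (a • v) ⊗ₜ[k] dualMul k H (g ⊗ₜ[k] f) := by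
  rw [leftMulOn_apply, TensorProduct.tensorTensorTensorComm_tmul, TensorProduct.map_tmul,
    smulMap_tmul]

lemma leftMulOn_one : leftMulOn k H V ((1 : H) ⊗ₜ[k] (Coalgebra.counit (R := k) (A := H))) =
    LinearMap.id := by
  apply TensorProduct.ext'
  intro v f
  rw [leftMulOn_tmul, one_smul, dualMul_tmul, LinearMap.id_apply]
  congr 1
  rw [show (Coalgebra.counit (R := k) (A := H)) = cone (k := k) (C := H) (A := k) from
    by ext a; simp [cone], cone_cmul]

lemma leftMulOn_mulHD (q p : H ⊗[k] Module.Dual k H) :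
    leftMulOn k H V (mulHD k H (q ⊗ₜ[k] p)) = leftMulOn k H V q ∘ₗ leftMulOn k H V p := by
  apply TensorProduct.ext'
  intro v φ
  simp only [comp_apply]
  induction q using TensorProduct.induction_on with
  | zero => simp [leftMulOn_zero_q]
  | add q1 q2 h1 h2 =>
      rw [TensorProduct.add_tmul, map_add, leftMulOn_add_q, leftMulOn_add_q, h1, h2]
  | tmul a g =>
      induction p using TensorProduct.induction_on with
      | zero => simp [leftMulOn_zero_q]
      | add p1 p2 h1 h2 =>
          rw [TensorProduct.tmul_add, map_add, leftMulOn_add_q, leftMulOn_add_q, h1, h2,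
            map_add]
      | tmul b f =>
          rw [mulHD_tmul, leftMulOn_tmul, leftMulOn_tmul, leftMulOn_tmul, mul_smul,
            dualMul_tmul, dualMul_tmul, dualMul_tmul, dualMul_tmul, cmul_assoc]

lemma evE_leftMulOn (q : H ⊗[k] Module.Dual k H) (x : V ⊗[k] Module.Dual k H) :
    evE V (leftMulOn k H V q x) =
      smulMap k H V ∘ₗ TensorProduct.map (tilde q) (evE V x) ∘ₗ Coalgebra.comul := by
  induction q using TensorProduct.induction_on with
  | zero =>
      rw [leftMulOn_zero_q, map_zero, map_zero, TensorProduct.map_zero_left, zero_comp,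
        comp_zero]
  | add q1 q2 h1 h2 =>
      rw [leftMulOn_add_q, map_add, h1, h2, map_add, TensorProduct.map_add_left, add_comp,
        comp_add]
  | tmul a g =>
      induction x using TensorProduct.induction_on with
      | zero => simp [TensorProduct.map_zero_right]
      | add x1 x2 h1 h2 =>
          rw [map_add, map_add, h1, h2, map_add, TensorProduct.map_add_right, add_comp,
            comp_add]
      | tmul v f =>
          rw [leftMulOn_tmul, dualMul_tmul]
          ext h
          simp only [comp_apply]
          rw [evE_tmul, cmul_apply]
          induction (Coalgebra.comul (R := k) h) using TensorProduct.induction_on with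
          | zero => simp
          | tmul x y =>
              rw [TensorProduct.map_tmul, TensorProduct.map_tmul, LinearMap.mul'_apply,
                tilde_tmul, evE_tmul, smulMap_tmul, smul_assoc, ksmul_comm, smul_smul]
          | add x y hx hy => simp only [map_add, add_smul, hx, hy]

end DualAux


section FinalAux

variable {k H : Type*} [Field k] [Ring H] [HopfAlgebra k H]

section WithV

variable (V : Type*) [AddCommGroup V] [Module k V] [Module H V] [IsScalarTower k H V]

lemma op_counit (G : H →ₗ[k] H) (v : V) (h : H) :
    smulMap k H V (TensorProduct.map G
      (evE V (v ⊗ₜ[k] (Coalgebra.counit (R := k) (A := H)))) (Coalgebra.comul (R := k) h)) =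
    G h • v := by
  have hF : evE (k := k) (H := H) V (v ⊗ₜ[k] Coalgebra.counit) =
      LinearMap.toSpanSingleton k V v ∘ₗ Coalgebra.counit := by
    ext y; simp [evE_tmul]
  rw [hF]
  have e1 : TensorProduct.map G
      (LinearMap.toSpanSingleton k V v ∘ₗ (Coalgebra.counit (R := k) (A := H))) =
      TensorProduct.map LinearMap.id (LinearMap.toSpanSingleton k V v) ∘ₗ
        (TensorProduct.map G LinearMap.id ∘ₗ
          TensorProduct.map LinearMap.id (Coalgebra.counit (R := k) (A := H))) := by
    calc TensorProduct.map G (LinearMap.toSpanSingleton k V v ∘ₗ Coalgebra.counit)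
        = TensorProduct.map (LinearMap.id ∘ₗ G)
            (LinearMap.toSpanSingleton k V v ∘ₗ Coalgebra.counit) := by rw [id_comp]
      _ = TensorProduct.map LinearMap.id (LinearMap.toSpanSingleton k V v) ∘ₗ
            TensorProduct.map G Coalgebra.counit := TensorProduct.map_comp _ _ _ _
      _ = TensorProduct.map LinearMap.id (LinearMap.toSpanSingleton k V v) ∘ₗ
            TensorProduct.map (G ∘ₗ LinearMap.id) (LinearMap.id ∘ₗ Coalgebra.counit) := by
          rw [comp_id, id_comp]
      _ = _ := by rw [TensorProduct.map_comp]
  rw [e1]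
  simp only [comp_apply]
  rw [show (TensorProduct.map (LinearMap.id : H →ₗ[k] H) (Coalgebra.counit (R := k) (A := H))) =
      (Coalgebra.counit (R := k) (A := H)).lTensor H from rfl,
    Coalgebra.lTensor_counit_comul]
  simp only [TensorProduct.map_tmul, LinearMap.id_coe, id_eq,
    LinearMap.toSpanSingleton_apply, one_smul]
  rfl

lemma op_triv (G : H →ₗ[k] H)
    (hG : ∀ (h : H) (v : V), G h • v = (Coalgebra.counit (R := k) h : k) • v)
    (F : H →ₗ[k] V) (h : H) :
    smulMap k H V (TensorProduct.map G F (Coalgebra.comul (R := k) h)) = F h := by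
  have st2 : TensorProduct.map G F = G.rTensor V ∘ₗ F.lTensor H := by
    rw [rT_eq, lT_eq, ← TensorProduct.map_comp, comp_id, id_comp]
  have st1 : smulMap k H V ∘ₗ G.rTensor V =
      (TensorProduct.lid k V).toLinearMap ∘ₗ (Coalgebra.counit (R := k) (A := H)).rTensor V := by
    apply TensorProduct.ext'
    intro a v
    simp only [comp_apply, LinearMap.rTensor_tmul, LinearEquiv.coe_coe, TensorProduct.lid_tmul]
    rw [smulMap_tmul, hG]
  have st3 : (Coalgebra.counit (R := k) (A := H)).rTensor V ∘ₗ F.lTensor H =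
      F.lTensor k ∘ₗ (Coalgebra.counit (R := k) (A := H)).rTensor H := by
    rw [LinearMap.rTensor_comp_lTensor, LinearMap.lTensor_comp_rTensor]
  rw [st2]
  simp only [comp_apply]
  have h1 := DFunLike.congr_fun st1 ((F.lTensor H) (Coalgebra.comul (R := k) h))
  simp only [comp_apply, LinearEquiv.coe_coe] at h1
  rw [h1]
  have h2 := DFunLike.congr_fun st3 (Coalgebra.comul (R := k) h)
  simp only [comp_apply] at h2
  rw [h2, Coalgebra.rTensor_counit_comul]
  simp

/-- powers of an element of `H ⊗ H*` -/
noncomputable def qpowN (q : H ⊗[k] Module.Dual k H) : ℕ → H ⊗[k] Module.Dual k H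
  | 0 => (1 : H) ⊗ₜ[k] (Coalgebra.counit (R := k) (A := H))
  | n + 1 => mulHD k H (q ⊗ₜ[k] qpowN q n)

lemma leftMulOn_pow (q : H ⊗[k] Module.Dual k H) (n : ℕ) :
    leftMulOn k H V q ^ n = leftMulOn k H V (qpowN q n) := by
  induction n with
  | zero => rw [pow_zero, Module.End.one_eq_id, qpowN, leftMulOn_one]
  | succ n ih => rw [pow_succ', Module.End.mul_eq_comp, ih, ← leftMulOn_mulHD, qpowN]

end WithV

lemma tilde_listProd (l : List (H ⊗[k] Module.Dual k H)) :
    tilde (listProdHD k H l) = l.foldr (fun a G => cmul (tilde a) G) cone := by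
  induction l with
  | nil => exact tilde_one
  | cons a l ih => rw [listProdHD, tilde_mulHD, ih, List.foldr_cons]

variable [FiniteDimensional k H]

lemma tilde_qElem (T : H →ₗ[k] H)
    (hΔ : Coalgebra.comul ∘ₗ T = TensorProduct.map T T ∘ₗ Coalgebra.comul (R := k))
    (hε : Coalgebra.counit ∘ₗ T = Coalgebra.counit (R := k)) (r : ℕ) :
    tilde (qElem k H T r) = gamma k H T r := by
  rw [qElem, tilde_listProd, List.foldr_map]
  have e : (fun (i : ℕ) (G : H →ₗ[k] H) =>
      cmul (tilde (TensorProduct.map LinearMap.id ((T ^ i).dualMap) (coevaluation k H 1))) G) =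
      fun i G => cmul (T ^ (i + 0)) G := by
    funext i G
    rw [tilde_coev, Nat.add_zero]
  rw [e, fold_range T hΔ hε, pow_zero, Module.End.one_eq_id, comp_id]

lemma tilde_qpow (T : H →ₗ[k] H)
    (hΔ : Coalgebra.comul ∘ₗ T = TensorProduct.map T T ∘ₗ Coalgebra.comul (R := k))
    (hε : Coalgebra.counit ∘ₗ T = Coalgebra.counit (R := k)) (r : ℕ)
    (hTr : T ^ r = LinearMap.id) (n : ℕ) :
    tilde (qpowN (qElem k H T r) n) = gamma k H T (n * r) := by
  induction n with
  | zero => rw [qpowN, Nat.zero_mul, tilde_one, gamma_zero]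
  | succ n ih =>
      rw [qpowN, tilde_mulHD, ih, tilde_qElem T hΔ hε,
        show (n + 1) * r = r + n * r from by ring, gamma_add T hΔ hε, hTr, comp_id]

variable {V : Type*} [AddCommGroup V] [Module k V] [Module H V] [IsScalarTower k H V]

lemma main_iff (T : H →ₗ[k] H)
    (hΔ : Coalgebra.comul ∘ₗ T = TensorProduct.map T T ∘ₗ Coalgebra.comul (R := k))
    (hε : Coalgebra.counit ∘ₗ T = Coalgebra.counit (R := k)) (r : ℕ)
    (hTr : T ^ r = LinearMap.id) (n : ℕ) :
    leftMulOn k H V (qElem k H T r) ^ n = LinearMap.id ↔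
      (∀ (h : H) (v : V), gamma k H T (n * r) h • v = (Coalgebra.counit (R := k) h : k) • v) := by
  rw [leftMulOn_pow]
  constructor
  · intro hid h v
    have h0 : leftMulOn k H V (qpowN (qElem k H T r) n)
        (v ⊗ₜ[k] (Coalgebra.counit (R := k) (A := H))) =
        v ⊗ₜ[k] (Coalgebra.counit (R := k) (A := H)) := by
      rw [hid, LinearMap.id_apply]
    have h1 : evE V (leftMulOn k H V (qpowN (qElem k H T r) n)
        (v ⊗ₜ[k] (Coalgebra.counit (R := k) (A := H)))) h =
        evE V (v ⊗ₜ[k] (Coalgebra.counit (R := k) (A := H))) h := by rw [h0]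
    rw [evE_leftMulOn, tilde_qpow T hΔ hε r hTr] at h1
    simp only [comp_apply] at h1
    rw [op_counit] at h1
    rw [h1, evE_tmul]
  · intro htriv
    apply LinearMap.ext
    intro x
    apply evE_injective V
    rw [LinearMap.id_apply, evE_leftMulOn, tilde_qpow T hΔ hε r hTr]
    ext h
    simp only [comp_apply]
    exact op_triv V _ htriv (evE V x) h

lemma twist_eq (hinv : HopfAlgebra.antipode (R := k) (A := H) ∘ₗ
      HopfAlgebra.antipode (R := k) (A := H) = LinearMap.id)
    (hS : Function.Bijective (HopfAlgebra.antipode (R := k) (A := H)))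
    (T : H →ₗ[k] H) : twist k H hS T = T := by
  have hset : ∀ x : H, HopfAlgebra.antipode (R := k) (HopfAlgebra.antipode (R := k) x) = x := by
    intro x
    have := DFunLike.congr_fun hinv x
    simpa using this
  have hai : ∀ x, antipodeInv k H hS x = HopfAlgebra.antipode (R := k) x := by
    intro x
    rw [antipodeInv]
    simp only [LinearEquiv.coe_coe]
    rw [LinearEquiv.symm_apply_eq, LinearEquiv.ofBijective_apply]
    exact (hset x).symm
  ext x
  show antipodeInv k H hS (antipodeInv k H hS (T x)) = T x
  rw [hai, hai, hset]

end FinalAux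

end Stmt13Aux



/-- Let `H` be a finite-dimensional involutory Hopf algebra (`S² = Id`) over
a field `k`, `τ` a Hopf algebra automorphism of `H` of finite order `r`, and `V` a
finite-dimensional left `H`-module.  Let
`q_τ = ∏_{i=0}^{r-1} (Id_H ⊗ (τ*)^i)(coev(1)) ∈ H ⊗ H*`.  Then the multiplicative order of the
operator of left multiplication by `q_τ` on `V ⊗ H*` equals the twisted exponent `exp_τ(V)`
(both possibly infinite). -/
theorem stmt13 {k H : Type*} [Field k] [Ring H] [HopfAlgebra k H] [FiniteDimensional k H]
    (hinv : HopfAlgebra.antipode (R := k) (A := H) ∘ₗ HopfAlgebra.antipode (R := k) (A := H) =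
      LinearMap.id)
    (hS : Function.Bijective (HopfAlgebra.antipode (R := k) (A := H)))
    (τ : H ≃ₐc[k] H) (r : ℕ) (hr : HasOrder H (⇑τ) r)
    (V : Type*) [AddCommGroup V] [Module k V] [Module H V] [IsScalarTower k H V]
    [FiniteDimensional k V] :
    ∀ e : ℕ,
      IsLeast {n : ℕ | 0 < n ∧
        leftMulOn k H V (qElem k H (τ : H →ₗ[k] H) r) ^ n = LinearMap.id} e ↔
      IsLeast {n : ℕ | 0 < n ∧
        GammaTrivOn (twist k H hS (τ : H →ₗ[k] H)) (n * r) V} e := by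
  intro e
  have hτeq : twist k H hS (τ : H →ₗ[k] H) = (τ : H →ₗ[k] H) :=
    Stmt13Aux.twist_eq hinv hS _
  have hΔ : Coalgebra.comul ∘ₗ (τ : H →ₗ[k] H) =
      TensorProduct.map (τ : H →ₗ[k] H) (τ : H →ₗ[k] H) ∘ₗ Coalgebra.comul (R := k) :=
    (CoalgHomClass.map_comp_comul τ).symm
  have hε : Coalgebra.counit ∘ₗ (τ : H →ₗ[k] H) = Coalgebra.counit (R := k) :=
    CoalgHomClass.counit_comp τ
  have hTr : (τ : H →ₗ[k] H) ^ r = LinearMap.id := by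
    ext x
    rw [Module.End.pow_apply, LinearMap.id_apply]
    have hc : ⇑(τ : H →ₗ[k] H) = ⇑τ := rfl
    rw [hc]
    exact congrFun hr.2.1 x
  have hsets : {n : ℕ | 0 < n ∧
        leftMulOn k H V (qElem k H (τ : H →ₗ[k] H) r) ^ n = LinearMap.id}
      = {n : ℕ | 0 < n ∧ GammaTrivOn (twist k H hS (τ : H →ₗ[k] H)) (n * r) V} := by
    ext n
    simp only [Set.mem_setOf_eq, hτeq]
    exact and_congr_right fun _ => Stmt13Aux.main_iff _ hΔ hε r hTr n
  rw [hsets]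
end
end
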